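/- arXiv:2010.09405 — 6 statements merged into one kernel-verified Lean document; each statement's English description precedes it below -/
import Mathlib

section
/- Let F be ℝ or ℂ, p, q ≥ 1, row block sizes n₁,…,n_p ≥ 1 and column block sizes m₁,…,m_q ≥ 1 with n = Σ n_i and m = Σ m_j, degree bounds g_{ij} ∈ ℕ, and d ∈ ℕ. Identify 𝔉 = ∏_{(i,j)} (F^{n_i×m_j})^{g_{ij}+1} with F^G, where G = Σ_{(i,j)} n_i m_j (g_{ij}+1). For P ∈ 𝔉 let P̂(x) ∈ F[x]^{n×m} be the polynomial block matrix whose (i,j) block is Σ_{k=0}^{g_{ij}} P_k^{ij} x^k. Then the set {P ∈ 𝔉 : rk_{F(x)} P̂(x) < d}, where the rank is taken over the field F(x) of rational functions, is a proper algebraic variety if, and only if, d ≤ min{n, m}. Equivalently, {P ∈ 𝔉 : rk_{F(x)} P̂(x) ≥ d} is generic if, and only if, d ≤ min{n, m}. -/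
/-- A set `V ⊆ F^N` is an algebraic variety if it is the common zero locus of
finitely many polynomials. -/
def IsAlgVariety {ι F : Type} [CommRing F] (V : Set (ι → F)) : Prop :=
  ∃ (k : ℕ) (p : Fin k → MvPolynomial ι F),
    V = {x | ∀ i, MvPolynomial.eval x (p i) = 0}

/-- A proper algebraic variety is an algebraic variety strictly contained in `F^N`. -/
def IsProperAlgVariety {ι F : Type} [CommRing F] (V : Set (ι → F)) : Prop :=
  IsAlgVariety V ∧ V ≠ Set.univ

/-- A set `S ⊆ F^N` is generic if its complement is contained in a proper
algebraic variety. -/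
def IsGeneric {ι F : Type} [CommRing F] (S : Set (ι → F)) : Prop :=
  ∃ V : Set (ι → F), IsAlgVariety V ∧ V ≠ Set.univ ∧ Sᶜ ⊆ V

/-- The assembled `n × m` polynomial block matrix `P̂(x)` of a tuple of coefficient blocks
`P_k^{ij} ∈ F^{n_i × m_j}` (`0 ≤ k ≤ g_{ij}`): its `(i,j)` block is `Σ_k P_k^{ij} x^k`.
The tuple is encoded as a point of the coordinate space
`((i,j) : Fin p × Fin q) × (Fin (g i j + 1) × Fin (n_i) × Fin (m_j)) → F`. -/
noncomputable def polyBlock {F : Type} [CommRing F] {p q : ℕ}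
    (ns : Fin p → ℕ) (ms : Fin q → ℕ) (g : Fin p → Fin q → ℕ)
    (x : ((ij : Fin p × Fin q) ×
      (Fin (g ij.1 ij.2 + 1) × Fin (ns ij.1) × Fin (ms ij.2))) → F) :
    Matrix ((i : Fin p) × Fin (ns i)) ((j : Fin q) × Fin (ms j)) (Polynomial F) :=
  Matrix.of fun r c =>
    ∑ k : Fin (g r.1 c.1 + 1),
      Polynomial.C (x ⟨(r.1, c.1), (k, r.2, c.2)⟩) * Polynomial.X ^ (k : ℕ)

/-!
Over a field, `d ≤ rank M` iff some `d × d` minor of `M` is nonzero. A minor of `P̂(x)` is a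
polynomial in `x` whose coefficients are polynomials in the entries of `P`; as `F[x]` embeds in
`F(x)`, the set `{P : rk P̂ < d}` is the common zero set of all these coefficients. It is proper iff
some `P` has `rk P̂ ≥ d`, which happens exactly when `d ≤ min n m`: take `P` constant with a
`d × d` identity submatrix.
-/

namespace Matrix

variable {m n K : Type*} [Fintype m] [Fintype n] [Field K]

lemma exists_linearIndependent_rows_of_le_rank {d : ℕ} (M : Matrix m n K) (h : d ≤ M.rank) :
    ∃ r : Fin d → m, LinearIndependent K (fun i => M (r i)) := by
  obtain ⟨κ, a, ha, hspan, hli⟩ := exists_linearIndependent' K M.row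
  have : Finite κ := Finite.of_injective a ha
  cases nonempty_fintype κ
  have hcard : Fintype.card κ = M.rank := by
    rw [rank_eq_finrank_span_row, ← hspan, finrank_span_eq_card hli]
  obtain ⟨e⟩ : Nonempty (Fin d ↪ κ) :=
    Function.Embedding.nonempty_of_card_le (by rwa [Fintype.card_fin, hcard])
  exact ⟨a ∘ e, hli.comp e e.injective⟩

theorem le_rank_iff_exists_det_submatrix_ne_zero {d : ℕ} (M : Matrix m n K) :
    d ≤ M.rank ↔ ∃ (r : Fin d → m) (c : Fin d → n), (M.submatrix r c).det ≠ 0 := by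
  constructor
  · intro h
    obtain ⟨r, hr⟩ := M.exists_linearIndependent_rows_of_le_rank h
    have hrank : (M.submatrix r id)ᵀ.rank = d := by
      rw [rank_transpose, LinearIndependent.rank_matrix (M := M.submatrix r id) hr, Fintype.card_fin]
    obtain ⟨c, hc⟩ := (M.submatrix r id)ᵀ.exists_linearIndependent_rows_of_le_rank hrank.ge
    have hunit : IsUnit (M.submatrix r c) := linearIndependent_cols_iff_isUnit.mp hc
    exact ⟨r, c, ((isUnit_iff_isUnit_det _).mp hunit).ne_zero⟩
  · rintro ⟨r, c, hdet⟩
    classical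
    calc d = (M.submatrix r c).rank := by rw [rank_of_det_ne_zero hdet, Fintype.card_fin]
      _ ≤ M.rank := rank_submatrix_le M r c

theorem rank_map {L : Type*} [Field L] (f : K →+* L) (M : Matrix m n K) :
    (M.map f).rank = M.rank := by
  refine eq_of_forall_le_iff fun d => ?_
  have hdet (A : Matrix (Fin d) (Fin d) K) : (A.map f).det = f A.det := (f.map_det A).symm
  simp only [le_rank_iff_exists_det_submatrix_ne_zero, submatrix_map, hdet, map_ne_zero]

theorem exists_le_rank {d : ℕ} (hm : d ≤ Fintype.card m) (hn : d ≤ Fintype.card n) :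
    ∃ M : Matrix m n K, d ≤ M.rank := by
  classical
  obtain ⟨u⟩ : Nonempty (Fin d ↪ m) := Function.Embedding.nonempty_of_card_le (by simpa)
  obtain ⟨w⟩ : Nonempty (Fin d ↪ n) := Function.Embedding.nonempty_of_card_le (by simpa)
  let M : Matrix m n K := of fun i j => if ∃ t, u t = i ∧ w t = j then 1 else 0
  have hsub : M.submatrix u w = 1 := by
    ext s t
    simp [M, one_apply, u.injective.eq_iff, w.injective.eq_iff]
  refine ⟨M, ?_⟩
  calc d = (M.submatrix u w).rank := by rw [hsub, rank_one, Fintype.card_fin]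
    _ ≤ M.rank := rank_submatrix_le M u w

end Matrix

section AlgVariety

variable {ι F : Type} [CommRing F]

lemma isAlgVariety_setOf_eval_eq_zero (P : MvPolynomial ι F) :
    IsAlgVariety {x : ι → F | MvPolynomial.eval x P = 0} :=
  ⟨1, fun _ => P, by simp⟩

lemma IsAlgVariety.iInter {J : Type*} [Finite J] {V : J → Set (ι → F)}
    (hV : ∀ j, IsAlgVariety (V j)) : IsAlgVariety (⋂ j, V j) := by
  choose k P hP using hV
  obtain ⟨N, ⟨e⟩⟩ := Finite.exists_equiv_fin ((j : J) × Fin (k j))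
  refine ⟨N, fun i => P _ (e.symm i).2, ?_⟩
  ext x
  simp only [Set.mem_iInter, hP, Set.mem_ofPred_eq]
  refine ⟨fun h i => h _ _, fun h j i => ?_⟩
  have := h (e ⟨j, i⟩)
  rwa [Equiv.symm_apply_apply] at this

lemma isAlgVariety_setOf_map_eval_eq_zero (Q : Polynomial (MvPolynomial ι F)) :
    IsAlgVariety {x : ι → F | Q.map (MvPolynomial.eval x) = 0} := by
  have hQ : {x : ι → F | Q.map (MvPolynomial.eval x) = 0}
      = ⋂ n : Q.support, {x | MvPolynomial.eval x (Q.coeff n) = 0} := by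
    ext x
    simp only [Set.mem_iInter, Set.mem_ofPred_eq, Polynomial.ext_iff, Polynomial.coeff_map,
      Polynomial.coeff_zero, Subtype.forall, Polynomial.mem_support_iff]
    refine ⟨fun h n _ => h n, fun h n => ?_⟩
    by_cases hn : Q.coeff n = 0
    · simp [hn]
    · exact h n hn
  rw [hQ]
  exact IsAlgVariety.iInter fun n => isAlgVariety_setOf_eval_eq_zero _

lemma IsAlgVariety.isGeneric_compl_iff {S : Set (ι → F)} (hS : IsAlgVariety S) :
    IsGeneric Sᶜ ↔ S ≠ Set.univ := by
  refine ⟨fun ⟨V, _, hV, hSV⟩ hS_univ => hV ?_, fun h => ⟨S, hS, h, by rw [compl_compl]⟩⟩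
  rw [compl_compl, hS_univ] at hSV
  exact Set.univ_subset_iff.mp hSV

end AlgVariety

lemma isAlgVariety_setOf_rank_lt {ι F R C : Type} [Field F] [Fintype R] [Fintype C]
    (M : Matrix R C (Polynomial (MvPolynomial ι F))) (d : ℕ) :
    IsAlgVariety {x : ι → F | ((M.map (Polynomial.map (MvPolynomial.eval x))).map
      (algebraMap (Polynomial F) (RatFunc F))).rank < d} := by
  classical
  have hM : {x : ι → F | ((M.map (Polynomial.map (MvPolynomial.eval x))).map
        (algebraMap (Polynomial F) (RatFunc F))).rank < d}
      = ⋂ rc : (Fin d → R) × (Fin d → C),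
          {x | (M.submatrix rc.1 rc.2).det.map (MvPolynomial.eval x) = 0} := by
    ext x
    simp only [Set.mem_ofPred_eq, Set.mem_iInter, ← not_le,
      Matrix.le_rank_iff_exists_det_submatrix_ne_zero, Matrix.map_map, Matrix.submatrix_map,
      not_exists, not_not, Prod.forall]
    refine forall₂_congr fun r c => ?_
    let φ := (algebraMap (Polynomial F) (RatFunc F)).comp
      (Polynomial.mapRingHom (MvPolynomial.eval x))
    have hdet : ((M.submatrix r c).map φ).det = φ (M.submatrix r c).det := (φ.map_det _).symm
    change ((M.submatrix r c).map φ).det = 0 ↔ _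
    rw [hdet]
    exact map_eq_zero_iff _ (RatFunc.algebraMap_injective F)
  rw [hM]
  exact IsAlgVariety.iInter fun _ => isAlgVariety_setOf_map_eval_eq_zero _

section polyBlock

variable {p q : ℕ} (ns : Fin p → ℕ) (ms : Fin q → ℕ) (g : Fin p → Fin q → ℕ)

lemma polyBlock_map {R S : Type} [CommRing R] [CommRing S] (φ : R →+* S)
    (x : ((ij : Fin p × Fin q) × (Fin (g ij.1 ij.2 + 1) × Fin (ns ij.1) × Fin (ms ij.2))) → R) :
    (polyBlock ns ms g x).map (Polynomial.map φ) = polyBlock ns ms g (φ ∘ x) := by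
  ext r c
  simp [polyBlock, Polynomial.map_sum]

lemma polyBlock_eq_map_eval {F : Type} [CommRing F]
    (x : ((ij : Fin p × Fin q) × (Fin (g ij.1 ij.2 + 1) × Fin (ns ij.1) × Fin (ms ij.2))) → F) :
    polyBlock ns ms g x
      = (polyBlock ns ms g MvPolynomial.X).map (Polynomial.map (MvPolynomial.eval x)) := by
  rw [polyBlock_map]
  congr
  ext v
  simp

lemma exists_polyBlock_eq_map_C {F : Type} [CommRing F]
    (A : Matrix ((i : Fin p) × Fin (ns i)) ((j : Fin q) × Fin (ms j)) F) :
    ∃ x, polyBlock ns ms g x = A.map Polynomial.C := by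
  refine ⟨fun v => if (v.2.1 : ℕ) = 0 then A ⟨v.1.1, v.2.2.1⟩ ⟨v.1.2, v.2.2.2⟩ else 0, ?_⟩
  ext r c
  simp [polyBlock, Fin.sum_univ_succ]

lemma isAlgVariety_setOf_rank_polyBlock_lt (F : Type) [Field F] (d : ℕ) :
    IsAlgVariety {x : ((ij : Fin p × Fin q) ×
        (Fin (g ij.1 ij.2 + 1) × Fin (ns ij.1) × Fin (ms ij.2))) → F |
      ((polyBlock ns ms g x).map (algebraMap (Polynomial F) (RatFunc F))).rank < d} := by
  convert isAlgVariety_setOf_rank_lt (polyBlock ns ms g MvPolynomial.X) d using 4 with x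
  rw [polyBlock_eq_map_eval]

lemma exists_le_rank_polyBlock_iff (F : Type) [Field F] (d : ℕ) :
    (∃ x : ((ij : Fin p × Fin q) × (Fin (g ij.1 ij.2 + 1) × Fin (ns ij.1) × Fin (ms ij.2))) → F,
      d ≤ ((polyBlock ns ms g x).map (algebraMap (Polynomial F) (RatFunc F))).rank) ↔
      d ≤ min (∑ i, ns i) (∑ j, ms j) := by
  have hrows : Fintype.card ((i : Fin p) × Fin (ns i)) = ∑ i, ns i := by simp
  have hcols : Fintype.card ((j : Fin q) × Fin (ms j)) = ∑ j, ms j := by simp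
  constructor
  · rintro ⟨x, hx⟩
    exact le_min (hx.trans ((Matrix.rank_le_card_height _).trans_eq hrows))
      (hx.trans ((Matrix.rank_le_card_width _).trans_eq hcols))
  · intro hd
    obtain ⟨A, hA⟩ := Matrix.exists_le_rank (K := F) (hrows ▸ hd.trans (min_le_left _ _))
      (hcols ▸ hd.trans (min_le_right _ _))
    obtain ⟨x, hx⟩ := exists_polyBlock_eq_map_C ns ms g A
    refine ⟨x, ?_⟩
    have hC : ⇑(algebraMap (Polynomial F) (RatFunc F)) ∘ ⇑Polynomial.C
        = algebraMap F (RatFunc F) := by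
      rw [IsScalarTower.algebraMap_eq F (Polynomial F) (RatFunc F), Polynomial.algebraMap_eq]
      rfl
    rwa [hx, Matrix.map_map, hC, Matrix.rank_map]

end polyBlock

theorem statement_10_general (F : Type) [RCLike F]
    (p q : ℕ)
    (ns : Fin p → ℕ) (ms : Fin q → ℕ)
    (g : Fin p → Fin q → ℕ) (d : ℕ) :
    (IsProperAlgVariety {x : ((ij : Fin p × Fin q) ×
        (Fin (g ij.1 ij.2 + 1) × Fin (ns ij.1) × Fin (ms ij.2))) → F |
        ((polyBlock ns ms g x).map (algebraMap (Polynomial F) (RatFunc F))).rank < d} ↔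
      d ≤ min (∑ i, ns i) (∑ j, ms j)) ∧
    (IsGeneric {x : ((ij : Fin p × Fin q) ×
        (Fin (g ij.1 ij.2 + 1) × Fin (ns ij.1) × Fin (ms ij.2))) → F |
        d ≤ ((polyBlock ns ms g x).map (algebraMap (Polynomial F) (RatFunc F))).rank} ↔
      d ≤ min (∑ i, ns i) (∑ j, ms j)) := by
  have hS := isAlgVariety_setOf_rank_polyBlock_lt ns ms g F d
  have hne : {x : ((ij : Fin p × Fin q) ×
        (Fin (g ij.1 ij.2 + 1) × Fin (ns ij.1) × Fin (ms ij.2))) → F |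
        ((polyBlock ns ms g x).map (algebraMap (Polynomial F) (RatFunc F))).rank < d} ≠ Set.univ
      ↔ d ≤ min (∑ i, ns i) (∑ j, ms j) := by
    simp only [Set.ne_univ_iff_exists_notMem, Set.mem_ofPred_eq, not_lt]
    exact exists_le_rank_polyBlock_iff ns ms g F d
  refine ⟨(and_iff_right hS).trans hne, ?_⟩
  rw [← hne, ← hS.isGeneric_compl_iff]
  simp only [Set.compl_ofPred, not_lt]

/-- Generic full rank property for polynomial block matrices: the set of tuples `P`
with `rk_{F(x)} P̂(x) < d` (rank over the field of rational functions) is a proper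
algebraic variety iff `d ≤ min n m`; equivalently `{P : rk_{F(x)} P̂(x) ≥ d}` is
generic iff `d ≤ min n m`. -/
theorem statement_10 (F : Type) [RCLike F]
    (p q : ℕ) (hp : 1 ≤ p) (hq : 1 ≤ q)
    (ns : Fin p → ℕ) (ms : Fin q → ℕ)
    (hns : ∀ i, 1 ≤ ns i) (hms : ∀ j, 1 ≤ ms j)
    (g : Fin p → Fin q → ℕ) (d : ℕ) :
    (IsProperAlgVariety {x : ((ij : Fin p × Fin q) ×
        (Fin (g ij.1 ij.2 + 1) × Fin (ns ij.1) × Fin (ms ij.2))) → F |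
        ((polyBlock ns ms g x).map (algebraMap (Polynomial F) (RatFunc F))).rank < d} ↔
      d ≤ min (∑ i, ns i) (∑ j, ms j)) ∧
    (IsGeneric {x : ((ij : Fin p × Fin q) ×
        (Fin (g ij.1 ij.2 + 1) × Fin (ns ij.1) × Fin (ms ij.2))) → F |
        d ≤ ((polyBlock ns ms g x).map (algebraMap (Polynomial F) (RatFunc F))).rank} ↔
      d ≤ min (∑ i, ns i) (∑ j, ms j)) :=
  statement_10_general F p q ns ms g d
end

section
/- Let F be ℝ or ℂ, p, q ≥ 1, row block sizes n₁,…,n_p ≥ 1 and column block sizes m₁,…,m_q ≥ 1 with n = Σ n_i and m = Σ m_j, degree bounds g_{ij} ∈ ℕ, and d ∈ ℕ. Identify 𝔉 = ∏_{(i,j)} (F^{n_i×m_j})^{g_{ij}+1} with F^G, where G = Σ_{(i,j)} n_i m_j (g_{ij}+1). For P ∈ 𝔉 let P̂(x) ∈ F[x]^{n×m} be the polynomial block matrix whose (i,j) block is Σ_{k=0}^{g_{ij}} P_k^{ij} x^k. Then the set S = {P ∈ 𝔉 : for every λ ∈ ℂ, the complex matrix P̂(λ) ∈ ℂ^{n×m}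 has rank ≥ d} is generic if, and only if, d ≤ min{n, m} and ( it is not the case that d = n = m, or g_{ij} = 0 for all i ∈ [p], j ∈ [q] ). -/
/-- The complex `n × m` matrix `P̂(λ)` obtained by evaluating the polynomial block matrix
`P̂(x)` (with `(i,j)` block `Σ_k P_k^{ij} x^k`, coefficients in `K` viewed in `ℂ` via `φ`)
at `λ ∈ ℂ`. -/
noncomputable def evalBlockC {K : Type} [CommRing K] (φ : K →+* ℂ) {p q : ℕ}
    (ns : Fin p → ℕ) (ms : Fin q → ℕ) (g : Fin p → Fin q → ℕ)
    (x : ((ij : Fin p × Fin q) ×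
      (Fin (g ij.1 ij.2 + 1) × Fin (ns ij.1) × Fin (ms ij.2))) → K)
    (lam : ℂ) :
    Matrix ((i : Fin p) × Fin (ns i)) ((j : Fin q) × Fin (ms j)) ℂ :=
  Matrix.of fun r c =>
    ∑ k : Fin (g r.1 c.1 + 1), φ (x ⟨(r.1, c.1), (k, r.2, c.2)⟩) * lam ^ (k : ℕ)

open Polynomial Matrix

namespace Statement11Aux

section P1
variable {F : Type} [Field F]

theorem eq_zero_of_eval_zero {ι : Type} [Infinite F] {f : MvPolynomial ι F}
    (h : ∀ x, MvPolynomial.eval x f = 0) : f = 0 :=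
  MvPolynomial.funext (q := 0) (by simpa using h)

theorem isGeneric_iff {ι : Type} [Infinite F] (S : Set (ι → F)) :
    IsGeneric S ↔ ∃ f : MvPolynomial ι F, f ≠ 0 ∧ ∀ x, x ∉ S → MvPolynomial.eval x f = 0 := by
  constructor
  · rintro ⟨V, ⟨k, pp, rfl⟩, hVne, hVsub⟩
    have : ∃ x, x ∉ {x | ∀ i, MvPolynomial.eval x (pp i) = 0} := by
      by_contra h
      push_neg at h
      exact hVne (Set.eq_univ_iff_forall.2 h)
    obtain ⟨x, hx⟩ := this
    simp only [Set.mem_setOf_eq, not_forall] at hx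
    obtain ⟨i, hi⟩ := hx
    refine ⟨pp i, fun h0 => hi (by simp [h0]), fun y hy => hVsub hy i⟩
  · rintro ⟨f, hf, hvan⟩
    refine ⟨{x | ∀ _ : Fin 1, MvPolynomial.eval x f = 0}, ⟨1, fun _ => f, rfl⟩, ?_, ?_⟩
    · intro h
      apply hf
      apply eq_zero_of_eval_zero
      intro x
      have := Set.eq_univ_iff_forall.1 h x
      exact this 0
    · intro x hx _
      exact hvan x hx

theorem not_generic_of_vanishing {ι : Type} [Infinite F] {S : Set (ι → F)}
    (hS : IsGeneric S) {h : MvPolynomial ι F} (hh : h ≠ 0)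
    (hv : ∀ x ∈ S, MvPolynomial.eval x h = 0) : False := by
  obtain ⟨f, hf, hfv⟩ := (isGeneric_iff S).1 hS
  have : ∀ x, MvPolynomial.eval x (f * h) = 0 := by
    intro x
    by_cases hx : x ∈ S
    · simp [hv x hx]
    · simp [hfv x hx]
  have := eq_zero_of_eval_zero this
  rcases mul_eq_zero.1 this with h1 | h1
  · exact hf h1
  · exact hh h1


end P1

section P2

/-- degree bound for determinants of polynomial matrices -/
theorem natDegree_det_le {R : Type*} [CommRing R] {n : Type} [DecidableEq n] [Fintype n]
    (M : Matrix n n (Polynomial R)) (b : n → n → ℕ) (hb : ∀ i j, (M i j).natDegree ≤ b i j)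
    (N : ℕ) (hN : ∀ σ : Equiv.Perm n, ∑ i, b (σ i) i ≤ N) : M.det.natDegree ≤ N := by
  rw [Matrix.det_apply']
  apply Polynomial.natDegree_sum_le_of_forall_le
  intro σ _
  refine le_trans (Polynomial.natDegree_mul_le) ?_
  rw [Polynomial.natDegree_intCast, zero_add]
  refine le_trans (Polynomial.natDegree_prod_le _ _) ?_
  exact le_trans (Finset.sum_le_sum (fun i _ => hb (σ i) i)) (hN σ)

/-- Sylvester-style matrix of two polynomials with formal degrees `d₁, d₂`. -/
def sylv {K : Type*} [Semiring K] (a b : K[X]) (d₁ d₂ : ℕ) :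
    Matrix (Fin (d₁ + d₂)) (Fin (d₁ + d₂)) K := fun i j =>
  if (i : ℕ) < d₂ then (if (i : ℕ) ≤ (j : ℕ) then a.coeff ((j : ℕ) - (i : ℕ)) else 0)
  else (if (i : ℕ) - d₂ ≤ (j : ℕ) then b.coeff ((j : ℕ) - ((i : ℕ) - d₂)) else 0)

theorem sylv_map {K L : Type*} [Semiring K] [Semiring L] (ψ : K →+* L) (a b : K[X])
    (d₁ d₂ : ℕ) : (sylv a b d₁ d₂).map ψ = sylv (a.map ψ) (b.map ψ) d₁ d₂ := by
  funext i j
  simp only [Matrix.map_apply, sylv, Polynomial.coeff_map, apply_ite ψ, map_zero]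

theorem det_sylv_eq_zero {K : Type*} [Field K] {a b : K[X]} {d₁ d₂ : ℕ}
    (h1 : a.natDegree ≤ d₁) (h2 : b.natDegree ≤ d₂) (hD : 1 ≤ d₁ + d₂) {z : K}
    (ha : a.eval z = 0) (hb : b.eval z = 0) : (sylv a b d₁ d₂).det = 0 := by
  classical
  rw [← Matrix.exists_mulVec_eq_zero_iff]
  refine ⟨fun j => z ^ (j : ℕ), ?_, ?_⟩
  · intro h0
    have := congrFun h0 ⟨0, hD⟩
    simp at this
  · funext i
    have key : ∀ (c : K[X]) (s : ℕ), s + c.natDegree < d₁ + d₂ → c.eval z = 0 →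
        (∑ j : Fin (d₁ + d₂), (if s ≤ (j : ℕ) then c.coeff ((j : ℕ) - s) else 0) * z ^ (j : ℕ))
          = 0 := by
      intro c s hs hc
      rw [Fin.sum_univ_eq_sum_range
        (fun j => (if s ≤ j then c.coeff (j - s) else 0) * z ^ j)]
      have h0 : ∑ j ∈ Finset.Ico 0 s,
          (if s ≤ j then c.coeff (j - s) else 0) * z ^ j = 0 := by
        apply Finset.sum_eq_zero
        intro j hj
        rw [Finset.mem_Ico] at hj
        rw [if_neg (by omega), zero_mul]
      rw [Finset.range_eq_Ico, ← Finset.sum_Ico_consecutive _ (Nat.zero_le s) (by omega),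
        h0, zero_add, Finset.sum_Ico_eq_sum_range]
      have : ∀ t ∈ Finset.range (d₁ + d₂ - s),
          (if s ≤ s + t then c.coeff (s + t - s) else 0) * z ^ (s + t)
            = z ^ s * (c.coeff t * z ^ t) := by
        intro t _
        rw [if_pos (Nat.le_add_right _ _), Nat.add_sub_cancel_left, pow_add]
        ring
      rw [Finset.sum_congr rfl this, ← Finset.mul_sum]
      have : ∑ t ∈ Finset.range (d₁ + d₂ - s), c.coeff t * z ^ t = c.eval z := by
        rw [Polynomial.eval_eq_sum_range' (n := d₁ + d₂ - s) (by omega)]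
      rw [this, hc, mul_zero]
    show ∑ j, sylv a b d₁ d₂ i j * z ^ (j : ℕ) = 0
    by_cases hi : (i : ℕ) < d₂
    · simp only [sylv, if_pos hi]
      exact key a i (by omega) ha
    · simp only [sylv, if_neg hi]
      exact key b ((i : ℕ) - d₂) (by have := i.2; omega) hb

/-- the rotation permutation -/
def rotP (d₁ d₂ : ℕ) : Equiv.Perm (Fin (d₁ + d₂)) where
  toFun i := ⟨if (i : ℕ) < d₂ then (i : ℕ) + d₁ else (i : ℕ) - d₂,
    by have := i.2; split_ifs <;> omega⟩
  invFun j := ⟨if (j : ℕ) < d₁ then (j : ℕ) + d₂ else (j : ℕ) - d₁,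
    by have := j.2; split_ifs <;> omega⟩
  left_inv i := by
    have := i.2
    ext
    simp only [Fin.val_mk]
    split_ifs <;> omega
  right_inv j := by
    have := j.2
    ext
    simp only [Fin.val_mk]
    split_ifs <;> omega

theorem det_sylv_pow_one {K : Type*} [Field K] (d₁ d₂ : ℕ) :
    (sylv (X ^ d₁ : K[X]) 1 d₁ d₂).det ≠ 0 := by
  classical
  have hmat : sylv (X ^ d₁ : K[X]) 1 d₁ d₂
      = (1 : Matrix (Fin (d₁ + d₂)) (Fin (d₁ + d₂)) K).submatrix (⇑(rotP d₁ d₂)) id := by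
    funext i j
    have hi := i.2
    have hj := j.2
    simp only [sylv, rotP, Matrix.one_apply, Matrix.submatrix_apply, id_eq, Equiv.coe_fn_mk,
      Polynomial.coeff_X_pow, Polynomial.coeff_one, Fin.ext_iff, Fin.val_mk]
    split_ifs <;> first | rfl | omega
  rw [hmat, Matrix.det_permute, Matrix.det_one, mul_one]
  rcases Int.units_eq_one_or (Equiv.Perm.sign (rotP d₁ d₂)) with h | h <;> rw [h] <;> simp

theorem rank_lt_card_of_det_eq_zero {K : Type*} [Field K] {n : Type} [Fintype n] [DecidableEq n]
    {M : Matrix n n K} (h : M.det = 0) : M.rank < Fintype.card n := by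
  obtain ⟨v, hv, hMv⟩ := (Matrix.exists_mulVec_eq_zero_iff).2 h
  have hker : LinearMap.ker M.mulVecLin ≠ ⊥ := by
    intro hbot
    apply hv
    have : v ∈ LinearMap.ker M.mulVecLin := by
      simpa [Matrix.mulVecLin] using hMv
    rwa [hbot, Submodule.mem_bot] at this
  have hrn := LinearMap.finrank_range_add_finrank_ker M.mulVecLin
  rw [Module.finrank_pi] at hrn
  have hkpos : 0 < Module.finrank K (LinearMap.ker M.mulVecLin) := by
    rw [Module.finrank_pos_iff]
    obtain ⟨w, hw, hw0⟩ := Submodule.exists_mem_ne_zero_of_ne_bot hker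
    exact ⟨⟨w, hw⟩, 0, by simp [Subtype.ext_iff, hw0]⟩
  have : M.rank = Module.finrank K (LinearMap.range M.mulVecLin) := rfl
  omega

theorem det_submatrix_eq_zero_of_rank_lt {K : Type*} [Field K] {A B : Type}
    [Fintype A] [Fintype B] [DecidableEq A] [DecidableEq B] {d : ℕ} (N : Matrix A B K)
    (hr : N.rank < d) (rows : Fin d → A) (cols : Fin d → B) :
    (N.submatrix rows cols).det = 0 := by
  by_contra h
  have hu : IsUnit (N.submatrix rows cols) :=
    (Matrix.isUnit_iff_isUnit_det _).2 (isUnit_iff_ne_zero.2 h)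
  have h1 : (N.submatrix rows cols).rank = d := by
    rw [Matrix.rank_of_isUnit _ hu, Fintype.card_fin]
  have hfac : N.submatrix rows cols
      = ((Matrix.of fun (l : Fin d) (a : A) => if rows l = a then (1 : K) else 0) * N)
        * (Matrix.of fun (b : B) (t : Fin d) => if b = cols t then (1 : K) else 0) := by
    ext l t
    simp [Matrix.mul_apply, Finset.sum_ite_eq, Finset.sum_ite_eq', ite_mul, mul_ite,
      Finset.mul_sum, Finset.sum_mul]
  have hle : (N.submatrix rows cols).rank ≤ N.rank := by
    rw [hfac]
    exact le_trans (Matrix.rank_mul_le_left _ _) (Matrix.rank_mul_le_right _ _)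
  omega


end P2

section P3
variable {p q : ℕ} (ns : Fin p → ℕ) (ms : Fin q → ℕ) (g : Fin p → Fin q → ℕ)

abbrev Idx : Type := (ij : Fin p × Fin q) × (Fin (g ij.1 ij.2 + 1) × Fin (ns ij.1) × Fin (ms ij.2))

abbrev RowT : Type := (i : Fin p) × Fin (ns i)
abbrev ColT : Type := (j : Fin q) × Fin (ms j)

variable (F : Type) [Field F]

/-- the generic polynomial block matrix -/
noncomputable def Mgen : Matrix (RowT ns) (ColT ms) (Polynomial (MvPolynomial (Idx ns ms g) F)) :=
  fun r c => ∑ k : Fin (g r.1 c.1 + 1),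
    Polynomial.C (MvPolynomial.X ⟨(r.1, c.1), (k, r.2, c.2)⟩) * Polynomial.X ^ (k : ℕ)

variable {F}

theorem natDegree_Mgen_le (r : RowT ns) (c : ColT ms) :
    ((Mgen ns ms g F) r c).natDegree ≤ g r.1 c.1 := by
  apply Polynomial.natDegree_sum_le_of_forall_le
  intro k _
  refine le_trans (Polynomial.natDegree_C_mul_le _ _) ?_
  rw [Polynomial.natDegree_X_pow]
  exact Nat.lt_succ_iff.mp k.2

theorem Mgen_map {T : Type*} [CommRing T] (ψ : MvPolynomial (Idx ns ms g) F →+* T)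
    (r : RowT ns) (c : ColT ms) :
    ((Mgen ns ms g F) r c).map ψ = ∑ k : Fin (g r.1 c.1 + 1),
      Polynomial.C (ψ (MvPolynomial.X ⟨(r.1, c.1), (k, r.2, c.2)⟩)) * Polynomial.X ^ (k : ℕ) := by
  simp [Mgen, Polynomial.map_sum]

theorem Mgen_eval_eq_evalBlockC (φ : F →+* ℂ) (x : Idx ns ms g → F) (lam : ℂ)
    (r : RowT ns) (c : ColT ms) :
    Polynomial.eval lam (((Mgen ns ms g F) r c).map
      ((φ.comp (MvPolynomial.eval x)) : MvPolynomial (Idx ns ms g) F →+* ℂ))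
      = evalBlockC φ ns ms g x lam r c := by
  rw [Mgen_map]
  simp [evalBlockC, Polynomial.eval_finset_sum]

theorem Mgen_realize (w : Matrix (RowT ns) (ColT ms) (Polynomial F))
    (hw : ∀ r c, (w r c).natDegree ≤ g r.1 c.1) :
    ∃ x₀ : Idx ns ms g → F, ∀ r c,
      ((Mgen ns ms g F) r c).map (MvPolynomial.eval x₀ : MvPolynomial (Idx ns ms g) F →+* F)
        = w r c := by
  refine ⟨fun v => (w ⟨v.1.1, v.2.2.1⟩ ⟨v.1.2, v.2.2.2⟩).coeff v.2.1, fun r c => ?_⟩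
  rw [Mgen_map]
  have : ∀ k : Fin (g r.1 c.1 + 1),
      (MvPolynomial.eval (fun v : Idx ns ms g =>
        (w ⟨v.1.1, v.2.2.1⟩ ⟨v.1.2, v.2.2.2⟩).coeff v.2.1))
        (MvPolynomial.X ⟨(r.1, c.1), (k, r.2, c.2)⟩) = (w r c).coeff k := by
    intro k
    rw [MvPolynomial.eval_X]
  rw [Finset.sum_congr rfl (fun k _ => by rw [this k])]
  rw [Fin.sum_univ_eq_sum_range (fun k => Polynomial.C ((w r c).coeff k) * Polynomial.X ^ k)]
  have := (Polynomial.as_sum_range' (w r c) _ (Nat.lt_succ_of_le (hw r c))).symm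
  simpa [Polynomial.C_mul_X_pow_eq_monomial] using this


end P3

section P4

-- THE CORE LEMMA
theorem core {F : Type} [Field F] (φ : F →+* ℂ) {ι A B : Type} [Fintype A] [Fintype B]
    [DecidableEq A] [DecidableEq B]
    (M : Matrix A B (Polynomial (MvPolynomial ι F)))
    (gb : A → B → ℕ) (hdeg : ∀ a b, (M a b).natDegree ≤ gb a b)
    (hreal : ∀ w : Matrix A B (Polynomial F), (∀ a b, (w a b).natDegree ≤ gb a b) →
      ∃ x₀ : ι → F, ∀ a b, (M a b).map (MvPolynomial.eval x₀ : MvPolynomial ι F →+* F) = w a b)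
    (d : ℕ) (hdA : d ≤ Fintype.card A) (hdB : d + 1 ≤ Fintype.card B) :
    ∃ f : MvPolynomial ι F, f ≠ 0 ∧ ∀ (x : ι → F) (lam : ℂ),
      (Matrix.of fun a b => Polynomial.eval lam
        ((M a b).map ((φ.comp (MvPolynomial.eval x)) : MvPolynomial ι F →+* ℂ))).rank < d →
      MvPolynomial.eval x f = 0 := by
  classical
  obtain ⟨rows⟩ : Nonempty (Fin d ↪ A) :=
    Function.Embedding.nonempty_iff_card_le.2 (by simpa using hdA)
  obtain ⟨cols₀⟩ : Nonempty (Fin (d + 1) ↪ B) :=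
    Function.Embedding.nonempty_iff_card_le.2 (by simpa using hdB)
  obtain ⟨σs, -, hσs⟩ := Finset.exists_max_image Finset.univ
    (fun σ : Equiv.Perm (Fin (d + 1)) => ∑ l : Fin d, gb (rows l) (cols₀ (σ l.castSucc)))
    ⟨1, Finset.mem_univ 1⟩
  set cols : Fin (d + 1) ↪ B := σs.toEmbedding.trans cols₀ with hcols
  set d₁ : ℕ := ∑ l : Fin d, gb (rows l) (cols l.castSucc) with hd₁
  set Mb : ℕ := ∑ l : Fin d, Finset.univ.sup (fun t : Fin (d + 1) => gb (rows l) (cols t))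
    with hMb
  set d₂ : ℕ := Mb + 1 with hd₂
  have hmax : ∀ τ : Equiv.Perm (Fin d),
      ∑ l : Fin d, gb (rows (τ l)) (cols l.castSucc) ≤ d₁ := by
    intro τ
    have h1 : ∑ l : Fin d, gb (rows (τ l)) (cols l.castSucc)
        = ∑ m : Fin d, gb (rows m) (cols (τ⁻¹ m).castSucc) := by
      rw [← Equiv.sum_comp τ (fun m => gb (rows m) (cols (τ⁻¹ m).castSucc))]
      apply Finset.sum_congr rfl
      intro l _
      simp
    rw [h1]
    have h2 : ∑ m : Fin d, gb (rows m) (cols (τ⁻¹ m).castSucc)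
        = ∑ m : Fin d, gb (rows m)
            (cols₀ ((((τ⁻¹).viaFintypeEmbedding Fin.castSuccEmb).trans σs) m.castSucc)) := by
      apply Finset.sum_congr rfl
      intro m _
      have hτ : (τ⁻¹.viaFintypeEmbedding Fin.castSuccEmb) m.castSucc = (τ⁻¹ m).castSucc :=
        Equiv.Perm.viaFintypeEmbedding_apply_image τ⁻¹ Fin.castSuccEmb m
      rw [hcols]
      simp [Function.Embedding.trans_apply, Equiv.coe_toEmbedding, Equiv.trans_apply, hτ]
    rw [h2]
    exact hσs _ (Finset.mem_univ _)
  set Agen := (M.submatrix rows (fun l : Fin d => cols l.castSucc)).det with hAgen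
  set Bgen := (M.submatrix rows (fun l : Fin d => cols l.succ)).det with hBgen
  have hAdeg : Agen.natDegree ≤ d₁ := by
    apply natDegree_det_le _ (fun l t => gb (rows l) (cols t.castSucc))
      (fun l t => hdeg _ _)
    intro σ
    exact hmax σ
  have hBdeg : Bgen.natDegree ≤ Mb := by
    apply natDegree_det_le _ (fun l t => gb (rows l) (cols t.succ))
      (fun l t => hdeg _ _)
    intro σ
    calc ∑ i : Fin d, gb (rows (σ i)) (cols i.succ)
        ≤ ∑ i : Fin d, Finset.univ.sup (fun t : Fin (d + 1) => gb (rows (σ i)) (cols t)) :=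
          Finset.sum_le_sum (fun i _ =>
            Finset.le_sup (f := fun t : Fin (d + 1) => gb (rows (σ i)) (cols t))
              (Finset.mem_univ i.succ))
      _ = Mb := Equiv.sum_comp σ
          (fun m => Finset.univ.sup (fun t : Fin (d + 1) => gb (rows m) (cols t)))
  set f := (sylv Agen Bgen d₁ d₂).det with hf
  -- the witness point
  set pat : Fin d → Fin (d + 1) → Polynomial F := fun l t =>
    if (t : ℕ) = (l : ℕ) then Polynomial.X ^ (gb (rows l) (cols t))
    else if (t : ℕ) = (l : ℕ) + 1 then 1 else 0 with hpat
  set w : Matrix A B (Polynomial F) := Matrix.of fun a b =>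
    if h1 : ∃ l, rows l = a then (if h2 : ∃ t, cols t = b then pat h1.choose h2.choose else 0)
    else 0 with hw
  have hwdeg : ∀ a b, (w a b).natDegree ≤ gb a b := by
    intro a b
    rw [hw]
    simp only [Matrix.of_apply]
    split_ifs with h1 h2
    · calc (pat h1.choose h2.choose).natDegree
          ≤ gb (rows h1.choose) (cols h2.choose) := by
            simp only [hpat]
            split_ifs
            · rw [Polynomial.natDegree_X_pow]
            · simp
            · simp
        _ = gb a b := by rw [h1.choose_spec, h2.choose_spec]
    · simp
    · simp
  obtain ⟨x₀, hx₀⟩ := hreal w hwdeg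
  have hsub : ∀ (l : Fin d) (t : Fin (d + 1)), w (rows l) (cols t) = pat l t := by
    intro l t
    have h1 : ∃ l', rows l' = rows l := ⟨l, rfl⟩
    have h2 : ∃ t', cols t' = cols t := ⟨t, rfl⟩
    have e1 : h1.choose = l := rows.injective h1.choose_spec
    have e2 : h2.choose = t := cols.injective h2.choose_spec
    rw [hw]
    simp only [Matrix.of_apply, dif_pos h1, dif_pos h2, e1, e2]
  have hA0 : Agen.map (MvPolynomial.eval x₀ : MvPolynomial ι F →+* F)
      = Polynomial.X ^ d₁ := by
    rw [hAgen, ← Polynomial.coe_mapRingHom, RingHom.map_det, RingHom.mapMatrix_apply]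
    have hm : (M.submatrix rows (fun l : Fin d => cols l.castSucc)).map
        ⇑(Polynomial.mapRingHom (MvPolynomial.eval x₀ : MvPolynomial ι F →+* F))
        = Matrix.of (fun l t : Fin d => pat l t.castSucc) := by
      funext l t
      simp only [Matrix.map_apply, Matrix.submatrix_apply, Polynomial.coe_mapRingHom,
        Matrix.of_apply]
      rw [hx₀, hsub]
    rw [hm, Matrix.det_of_upperTriangular]
    · have hdiag : ∀ l : Fin d, pat l l.castSucc
          = Polynomial.X ^ (gb (rows l) (cols l.castSucc)) := by
        intro l
        rw [hpat]
        simp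
      calc (∏ l : Fin d, Matrix.of (fun l t : Fin d => pat l t.castSucc) l l)
          = ∏ l : Fin d, Polynomial.X ^ (gb (rows l) (cols l.castSucc)) :=
            Finset.prod_congr rfl (fun l _ => hdiag l)
        _ = Polynomial.X ^ d₁ := by
            rw [Finset.prod_pow_eq_pow_sum, hd₁]
    · intro i j hij
      have hij' : (j : ℕ) < (i : ℕ) := hij
      simp only [Matrix.of_apply, hpat, Fin.coe_castSucc]
      rw [if_neg (by omega), if_neg (by omega)]
  have hB0 : Bgen.map (MvPolynomial.eval x₀ : MvPolynomial ι F →+* F) = 1 := by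
    rw [hBgen, ← Polynomial.coe_mapRingHom, RingHom.map_det, RingHom.mapMatrix_apply]
    have hm : (M.submatrix rows (fun l : Fin d => cols l.succ)).map
        ⇑(Polynomial.mapRingHom (MvPolynomial.eval x₀ : MvPolynomial ι F →+* F))
        = Matrix.of (fun l t : Fin d => pat l t.succ) := by
      funext l t
      simp only [Matrix.map_apply, Matrix.submatrix_apply, Polynomial.coe_mapRingHom,
        Matrix.of_apply]
      rw [hx₀, hsub]
    rw [hm, Matrix.det_of_lowerTriangular]
    · have hdiag : ∀ l : Fin d, pat l l.succ = 1 := by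
        intro l
        simp only [hpat, Fin.val_succ]
        rw [if_neg (by omega)]
        simp
      calc (∏ l : Fin d, Matrix.of (fun l t : Fin d => pat l t.succ) l l)
          = ∏ l : Fin d, (1 : Polynomial F) := Finset.prod_congr rfl (fun l _ => hdiag l)
        _ = 1 := Finset.prod_const_one
    · intro i j hij
      have hij' : (i : ℕ) < (j : ℕ) := hij
      simp only [Matrix.of_apply, hpat, Fin.val_succ]
      rw [if_neg (by omega), if_neg (by omega)]
  have hevalf : MvPolynomial.eval x₀ f
      = (sylv (Polynomial.X ^ d₁ : Polynomial F) 1 d₁ d₂).det := by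
    rw [hf, RingHom.map_det, RingHom.mapMatrix_apply, sylv_map, hA0, hB0]
  have hfne : f ≠ 0 := by
    intro h0
    apply det_sylv_pow_one (K := F) d₁ d₂
    rw [← hevalf, h0, map_zero]
  refine ⟨f, hfne, ?_⟩
  intro x lam hrank
  set Ψ : MvPolynomial ι F →+* ℂ := φ.comp (MvPolynomial.eval x) with hΨ
  have hvan : ∀ (cs : Fin d → Fin (d + 1)),
      Polynomial.eval lam (((M.submatrix rows (fun l : Fin d => cols (cs l))).det).map Ψ)
        = 0 := by
    intro cs
    rw [← Polynomial.coe_mapRingHom, RingHom.map_det, RingHom.mapMatrix_apply,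
      ← Polynomial.coe_evalRingHom, RingHom.map_det, RingHom.mapMatrix_apply]
    have hm : ((M.submatrix rows (fun l : Fin d => cols (cs l))).map
          ⇑(Polynomial.mapRingHom Ψ)).map ⇑(Polynomial.evalRingHom lam)
        = (Matrix.of fun a b => Polynomial.eval lam ((M a b).map Ψ)).submatrix rows
            (fun l : Fin d => cols (cs l)) := by
      funext l t
      simp
    rw [hm]
    exact det_submatrix_eq_zero_of_rank_lt _ hrank _ _
  have hΨf : Ψ f = 0 := by
    have h1 : Ψ f = (sylv (Agen.map Ψ) (Bgen.map Ψ) d₁ d₂).det := by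
      rw [hf, RingHom.map_det, RingHom.mapMatrix_apply, sylv_map]
    rw [h1]
    refine det_sylv_eq_zero (z := lam) ?_ ?_ (by omega) ?_ ?_
    · exact le_trans Polynomial.natDegree_map_le hAdeg
    · exact le_trans Polynomial.natDegree_map_le (le_trans hBdeg (by omega))
    · exact hvan (fun l => l.castSucc)
    · exact hvan (fun l => l.succ)
  have : φ (MvPolynomial.eval x f) = 0 := hΨf
  exact (map_eq_zero_iff φ φ.injective).1 this


end P4

section P5

/-- rank of any submatrix is at most the rank. -/
theorem rank_submatrix_le'' {K : Type*} [Field K] {A B A' B' : Type}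
    [Fintype A] [Fintype B] [Fintype A'] [Fintype B'] [DecidableEq A] [DecidableEq B]
    (N : Matrix A B K) (f : A' → A) (g : B' → B) :
    (N.submatrix f g).rank ≤ N.rank := by
  have hfac : N.submatrix f g
      = ((Matrix.of fun (l : A') (a : A) => if f l = a then (1 : K) else 0) * N)
        * (Matrix.of fun (b : B) (t : B') => if b = g t then (1 : K) else 0) := by
    ext l t
    simp [Matrix.mul_apply, Finset.sum_ite_eq, Finset.sum_ite_eq', ite_mul, mul_ite,
      Finset.mul_sum, Finset.sum_mul]
  rw [hfac]
  exact le_trans (Matrix.rank_mul_le_left _ _) (Matrix.rank_mul_le_right _ _)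

/-- Square case, `d = n = m`, all degrees zero: generic (nonvanishing certificate). -/
theorem sq_generic {F : Type} [Field F] (φ : F →+* ℂ) {ι A B : Type} [Fintype A] [Fintype B]
    [DecidableEq A] [DecidableEq B]
    (M : Matrix A B (Polynomial (MvPolynomial ι F)))
    (gb : A → B → ℕ) (hdeg : ∀ a b, (M a b).natDegree ≤ gb a b)
    (hreal : ∀ w : Matrix A B (Polynomial F), (∀ a b, (w a b).natDegree ≤ gb a b) →
      ∃ x₀ : ι → F, ∀ a b, (M a b).map (MvPolynomial.eval x₀ : MvPolynomial ι F →+* F) = w a b)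
    (hg0 : ∀ a b, gb a b = 0)
    {d : ℕ} (rows : Fin d → A) (cols : Fin d → B)
    (hrows : Function.Bijective rows) (hcols : Function.Bijective cols) :
    ∃ f : MvPolynomial ι F, f ≠ 0 ∧ ∀ (x : ι → F) (lam : ℂ),
      (Matrix.of fun a b => Polynomial.eval lam
        ((M a b).map ((φ.comp (MvPolynomial.eval x)) : MvPolynomial ι F →+* ℂ))).rank < d →
      MvPolynomial.eval x f = 0 := by
  classical
  set er : Fin d ≃ A := Equiv.ofBijective rows hrows with her
  set Dsq := (M.submatrix rows cols).det with hDsq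
  have hDdeg : Dsq.natDegree ≤ 0 := by
    apply natDegree_det_le _ (fun l t => gb (rows l) (cols t)) (fun l t => hdeg _ _)
    intro σ
    simp [hg0]
  refine ⟨Dsq.coeff 0, ?_, ?_⟩
  · -- nonvanishing
    set w : Matrix A B (Polynomial F) := Matrix.of fun a b =>
      if b = cols (er.symm a) then 1 else 0 with hw
    have hwdeg : ∀ a b, (w a b).natDegree ≤ gb a b := by
      intro a b
      rw [hw]
      simp only [Matrix.of_apply]
      split_ifs <;> simp
    obtain ⟨x₀, hx₀⟩ := hreal w hwdeg
    intro h0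
    have hde : Dsq.map (MvPolynomial.eval x₀ : MvPolynomial ι F →+* F) = 1 := by
      rw [hDsq, ← Polynomial.coe_mapRingHom, RingHom.map_det, RingHom.mapMatrix_apply]
      have hm : (M.submatrix rows cols).map
          ⇑(Polynomial.mapRingHom (MvPolynomial.eval x₀ : MvPolynomial ι F →+* F))
          = (1 : Matrix (Fin d) (Fin d) (Polynomial F)) := by
        funext l t
        simp only [Matrix.map_apply, Matrix.submatrix_apply, Polynomial.coe_mapRingHom]
        rw [hx₀, hw]
        have hsymm : er.symm (rows l) = l := er.symm_apply_apply l
        simp only [Matrix.of_apply, hsymm, Matrix.one_apply]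
        by_cases h : cols t = cols l
        · rw [if_pos h, if_pos (hcols.injective h).symm]
        · rw [if_neg h, if_neg (fun hlt => h (by rw [hlt]))]
      rw [hm, Matrix.det_one]
    have := congrArg (fun p => Polynomial.coeff p 0) hde
    simp only [Polynomial.coeff_map, h0, map_zero, Polynomial.coeff_one] at this
    exact one_ne_zero this.symm
  · -- vanishing
    intro x lam hrank
    set Ψ : MvPolynomial ι F →+* ℂ := φ.comp (MvPolynomial.eval x) with hΨ
    have h1 : Polynomial.eval lam (Dsq.map Ψ) = 0 := by
      rw [hDsq, ← Polynomial.coe_mapRingHom, RingHom.map_det, RingHom.mapMatrix_apply,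
        ← Polynomial.coe_evalRingHom, RingHom.map_det, RingHom.mapMatrix_apply]
      have hm : ((M.submatrix rows cols).map ⇑(Polynomial.mapRingHom Ψ)).map
            ⇑(Polynomial.evalRingHom lam)
          = (Matrix.of fun a b => Polynomial.eval lam ((M a b).map Ψ)).submatrix rows cols := by
        funext l t
        simp
      rw [hm]
      by_contra h
      have hu : IsUnit ((Matrix.of fun a b => Polynomial.eval lam
          ((M a b).map Ψ)).submatrix rows cols) :=
        (Matrix.isUnit_iff_isUnit_det _).2 (isUnit_iff_ne_zero.2 h)
      have h2 := Matrix.rank_of_isUnit _ hu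
      rw [Fintype.card_fin] at h2
      have h3 := rank_submatrix_le''
        (Matrix.of fun a b => Polynomial.eval lam ((M a b).map Ψ)) rows cols
      omega
    have h2 : (Dsq.map Ψ).natDegree = 0 :=
      Nat.le_zero.1 (le_trans Polynomial.natDegree_map_le hDdeg)
    have h3 : Polynomial.eval lam (Dsq.map Ψ) = (Dsq.map Ψ).coeff 0 := by
      conv_lhs => rw [Polynomial.eq_C_of_natDegree_eq_zero h2]
      simp
    have h4 : Ψ (Dsq.coeff 0) = 0 := by
      rw [← Polynomial.coeff_map, ← h3, h1]
    have : φ (MvPolynomial.eval x (Dsq.coeff 0)) = 0 := h4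
    exact (map_eq_zero_iff φ φ.injective).1 this

/-- Square case with a positive degree: certificate vanishing on the whole-rank set. -/
theorem sq_forward {F : Type} [Field F] (φ : F →+* ℂ) {ι A B : Type} [Fintype A] [Fintype B]
    [DecidableEq A] [DecidableEq B]
    (M : Matrix A B (Polynomial (MvPolynomial ι F)))
    (gb : A → B → ℕ)
    (hreal : ∀ w : Matrix A B (Polynomial F), (∀ a b, (w a b).natDegree ≤ gb a b) →
      ∃ x₀ : ι → F, ∀ a b, (M a b).map (MvPolynomial.eval x₀ : MvPolynomial ι F →+* F) = w a b)
    {d : ℕ} (rows : Fin d → A) (cols : Fin d → B)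
    (hrows : Function.Bijective rows) (hcols : Function.Bijective cols)
    (lstar : Fin d) (hg : 1 ≤ gb (rows lstar) (cols lstar)) :
    ∃ h : MvPolynomial ι F, h ≠ 0 ∧ ∀ x : ι → F,
      (∀ lam : ℂ, d ≤ (Matrix.of fun a b => Polynomial.eval lam
        ((M a b).map ((φ.comp (MvPolynomial.eval x)) : MvPolynomial ι F →+* ℂ))).rank) →
      MvPolynomial.eval x h = 0 := by
  classical
  set er : Fin d ≃ A := Equiv.ofBijective rows hrows with her
  set Dsq := (M.submatrix rows cols).det with hDsq
  refine ⟨Dsq.coeff 1, ?_, ?_⟩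
  · -- nonvanishing
    set w : Matrix A B (Polynomial F) := Matrix.of fun a b =>
      if b = cols (er.symm a) then (if a = rows lstar then Polynomial.X else 1) else 0 with hw
    have hwdeg : ∀ a b, (w a b).natDegree ≤ gb a b := by
      intro a b
      rw [hw]
      simp only [Matrix.of_apply]
      split_ifs with hb ha
      · subst ha
        subst hb
        have hsymm : er.symm (rows lstar) = lstar := er.symm_apply_apply lstar
        rw [hsymm, Polynomial.natDegree_X]
        exact hg
      · simp
      · simp
    obtain ⟨x₀, hx₀⟩ := hreal w hwdeg
    intro h0
    have hde : Dsq.map (MvPolynomial.eval x₀ : MvPolynomial ι F →+* F) = Polynomial.X := by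
      rw [hDsq, ← Polynomial.coe_mapRingHom, RingHom.map_det, RingHom.mapMatrix_apply]
      have hm : (M.submatrix rows cols).map
          ⇑(Polynomial.mapRingHom (MvPolynomial.eval x₀ : MvPolynomial ι F →+* F))
          = Matrix.diagonal (fun l : Fin d => if l = lstar then Polynomial.X else 1) := by
        funext l t
        simp only [Matrix.map_apply, Matrix.submatrix_apply, Polynomial.coe_mapRingHom]
        rw [hx₀, hw]
        have hsymm : er.symm (rows l) = l := er.symm_apply_apply l
        simp only [Matrix.of_apply, hsymm, Matrix.diagonal_apply]
        by_cases h : cols t = cols l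
        · have het : t = l := hcols.injective h
          subst het
          rw [if_pos rfl, if_pos rfl]
          by_cases h2 : t = lstar
          · subst h2
            rw [if_pos rfl, if_pos rfl]
          · rw [if_neg (fun hh => h2 (hrows.injective hh)), if_neg h2]
        · rw [if_neg h, if_neg (fun hlt : l = t => h (by rw [hlt]))]
      rw [hm, Matrix.det_diagonal,
        Finset.prod_ite_eq' Finset.univ lstar (fun _ => (Polynomial.X : Polynomial F))]
      simp
    have := congrArg (fun pp => Polynomial.coeff pp 1) hde
    simp only [Polynomial.coeff_map, h0, map_zero, Polynomial.coeff_X_one] at this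
    exact one_ne_zero this.symm
  · -- vanishing on the full-rank set
    intro x hx
    set ec : Fin d ≃ B := Equiv.ofBijective cols hcols with hec
    set Ψ : MvPolynomial ι F →+* ℂ := φ.comp (MvPolynomial.eval x) with hΨ
    have hroot : ∀ lam : ℂ, Polynomial.eval lam (Dsq.map Ψ) ≠ 0 := by
      intro lam h1
      have hdet : ((Matrix.of fun a b => Polynomial.eval lam
          ((M a b).map Ψ)).submatrix rows cols).det = 0 := by
        rw [← h1, hDsq, ← Polynomial.coe_mapRingHom, RingHom.map_det, RingHom.mapMatrix_apply,
          ← Polynomial.coe_evalRingHom, RingHom.map_det, RingHom.mapMatrix_apply]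
        apply congrArg Matrix.det
        funext l t
        simp
      have h2 := rank_lt_card_of_det_eq_zero hdet
      rw [Fintype.card_fin] at h2
      have h3 : (Matrix.of fun a b => Polynomial.eval lam ((M a b).map Ψ)).rank
          ≤ ((Matrix.of fun a b => Polynomial.eval lam
              ((M a b).map Ψ)).submatrix rows cols).rank := by
        have hrw : (Matrix.of fun a b => Polynomial.eval lam ((M a b).map Ψ))
            = (((Matrix.of fun a b => Polynomial.eval lam
                ((M a b).map Ψ)).submatrix rows cols).submatrix
                  (fun a => er.symm a) (fun b => ec.symm b)) := by
          funext a b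
          obtain ⟨l, rfl⟩ := hrows.surjective a
          obtain ⟨t, rfl⟩ := hcols.surjective b
          have h5 : er.symm (rows l) = l := er.symm_apply_apply l
          have h6 : ec.symm (cols t) = t := ec.symm_apply_apply t
          rw [Matrix.submatrix_apply, Matrix.submatrix_apply, h5, h6]
        conv_lhs => rw [hrw]
        exact rank_submatrix_le'' _ _ _
      exact lt_irrefl d (lt_of_le_of_lt (le_trans (hx lam) h3) h2)
    have hne : Dsq.map Ψ ≠ 0 := by
      intro h
      exact hroot 0 (by rw [h, Polynomial.eval_zero])
    have hdeg0 : (Dsq.map Ψ).natDegree = 0 := by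
      by_contra hne0
      obtain ⟨z, hz⟩ := Complex.exists_root
        ((Polynomial.natDegree_pos_iff_degree_pos).1 (Nat.pos_of_ne_zero hne0))
      exact hroot z hz
    have hc1 : (Dsq.map Ψ).coeff 1 = 0 :=
      Polynomial.coeff_eq_zero_of_natDegree_lt (by omega)
    have h4 : Ψ (Dsq.coeff 1) = 0 := by
      simpa [Polynomial.coeff_map] using hc1
    exact (map_eq_zero_iff φ φ.injective).1 h4


end P5

section P6
variable {p q : ℕ} (ns : Fin p → ℕ) (ms : Fin q → ℕ) (g : Fin p → Fin q → ℕ)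
variable {F : Type}

-- MAIN parametric theorem
theorem main {F : Type} [Field F] [Infinite F] (φ : F →+* ℂ)
    (hp : 1 ≤ p) (hq : 1 ≤ q) (hns : ∀ i, 1 ≤ ns i) (hms : ∀ j, 1 ≤ ms j) (d : ℕ) :
    IsGeneric {x : Idx ns ms g → F | ∀ lam : ℂ, d ≤ (evalBlockC φ ns ms g x lam).rank} ↔
      (d ≤ min (∑ i, ns i) (∑ j, ms j) ∧
        (¬ (d = ∑ i, ns i ∧ (∑ i, ns i) = ∑ j, ms j) ∨ ∀ i j, g i j = 0)) := by
  classical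
  have hcA : Fintype.card (RowT ns) = ∑ i, ns i := by
    simp [Fintype.card_sigma]
  have hcB : Fintype.card (ColT ms) = ∑ j, ms j := by
    simp [Fintype.card_sigma]
  have hMat : ∀ (x : Idx ns ms g → F) (lam : ℂ),
      (Matrix.of fun a b => Polynomial.eval lam
        (((Mgen ns ms g F) a b).map
          ((φ.comp (MvPolynomial.eval x)) : MvPolynomial (Idx ns ms g) F →+* ℂ)))
        = evalBlockC φ ns ms g x lam := by
    intro x lam
    funext r c
    exact Mgen_eval_eq_evalBlockC ns ms g φ x lam r c
  constructor
  · intro hgen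
    constructor
    · -- d ≤ min n m
      by_contra hmin
      push_neg at hmin
      obtain ⟨V, hV, hVne, hVsub⟩ := hgen
      apply hVne
      rw [Set.eq_univ_iff_forall]
      intro x
      apply hVsub
      simp only [Set.mem_compl_iff, Set.mem_setOf_eq, not_forall, not_le]
      refine ⟨0, ?_⟩
      have h1 : (evalBlockC φ ns ms g x 0).rank ≤ ∑ i, ns i := by
        rw [← hcA]
        exact Matrix.rank_le_card_height _
      have h2 : (evalBlockC φ ns ms g x 0).rank ≤ ∑ j, ms j := by
        rw [← hcB]
        exact Matrix.rank_le_card_width _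
      omega
    · -- second condition
      by_contra hc
      push_neg at hc
      obtain ⟨⟨hdn, hnm⟩, i0, j0, hg0⟩ := hc
      have hdcardA : Fintype.card (RowT ns) = d := by omega
      have hdcardB : Fintype.card (ColT ms) = d := by omega
      set er : Fin d ≃ RowT ns := (Fintype.equivFinOfCardEq hdcardA).symm with her
      set ec0 : Fin d ≃ ColT ms := (Fintype.equivFinOfCardEq hdcardB).symm with hec0
      have hns0 : 0 < ns i0 := hns i0
      have hms0 : 0 < ms j0 := hms j0
      set rstar : RowT ns := ⟨i0, ⟨0, hns0⟩⟩ with hrstar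
      set cstar : ColT ms := ⟨j0, ⟨0, hms0⟩⟩ with hcstar
      set lstar : Fin d := er.symm rstar with hlstar
      set ec : Fin d ≃ ColT ms := ec0.trans (Equiv.swap (ec0 lstar) cstar) with hec
      have hlr : er lstar = rstar := er.apply_symm_apply rstar
      have hlc : ec lstar = cstar := by
        rw [hec]
        simp [Equiv.swap_apply_left]
      obtain ⟨h, hh0, hhv⟩ := sq_forward φ (Mgen ns ms g F) (fun r c => g r.1 c.1)
        (Mgen_realize ns ms g) ⇑er ⇑ec er.bijective ec.bijective lstar
        (by rw [hlr, hlc]; exact Nat.one_le_iff_ne_zero.2 hg0)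
      apply not_generic_of_vanishing hgen hh0
      intro x hx
      apply hhv
      intro lam
      rw [hMat]
      exact hx lam
  · rintro ⟨hmin, hdisj⟩
    rw [isGeneric_iff]
    by_cases hm : d < ∑ j, ms j
    · obtain ⟨f, hf0, hfv⟩ := core φ (Mgen ns ms g F) (fun r c => g r.1 c.1)
        (natDegree_Mgen_le ns ms g) (Mgen_realize ns ms g) d (by omega) (by omega)
      refine ⟨f, hf0, ?_⟩
      intro x hx
      simp only [Set.mem_setOf_eq, not_forall, not_le] at hx
      obtain ⟨lam, hlam⟩ := hx
      refine hfv x lam ?_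
      rw [hMat]
      exact hlam
    · by_cases hn : d < ∑ i, ns i
      · -- transpose case
        obtain ⟨f, hf0, hfv⟩ := core φ (Mgen ns ms g F)ᵀ (fun c r => g r.1 c.1)
          (fun c r => natDegree_Mgen_le ns ms g r c)
          (fun w hw => by
            obtain ⟨x₀, hx₀⟩ := Mgen_realize ns ms g (F := F) wᵀ (fun r c => hw c r)
            exact ⟨x₀, fun c r => hx₀ r c⟩)
          d (by omega) (by omega)
        refine ⟨f, hf0, ?_⟩
        intro x hx
        simp only [Set.mem_setOf_eq, not_forall, not_le] at hx
        obtain ⟨lam, hlam⟩ := hx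
        refine hfv x lam ?_
        have htr : (Matrix.of fun c r => Polynomial.eval lam
            (((Mgen ns ms g F)ᵀ c r).map
              ((φ.comp (MvPolynomial.eval x)) : MvPolynomial (Idx ns ms g) F →+* ℂ)))
            = (Matrix.of fun r c => Polynomial.eval lam
              (((Mgen ns ms g F) r c).map
                ((φ.comp (MvPolynomial.eval x)) : MvPolynomial (Idx ns ms g) F →+* ℂ)))ᵀ := rfl
        rw [htr, Matrix.rank_transpose, hMat]
        exact hlam
      · -- square case, g ≡ 0
        have hdn : d = ∑ i, ns i := by omega
        have hnm : (∑ i, ns i) = ∑ j, ms j := by omega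
        have hg0 : ∀ i j, g i j = 0 := by
          rcases hdisj with h | h
          · exact absurd ⟨hdn, hnm⟩ h
          · exact h
        have hdcardA : Fintype.card (RowT ns) = d := by omega
        have hdcardB : Fintype.card (ColT ms) = d := by omega
        set er : Fin d ≃ RowT ns := (Fintype.equivFinOfCardEq hdcardA).symm
        set ec : Fin d ≃ ColT ms := (Fintype.equivFinOfCardEq hdcardB).symm
        obtain ⟨f, hf0, hfv⟩ := sq_generic φ (Mgen ns ms g F) (fun r c => g r.1 c.1)
          (natDegree_Mgen_le ns ms g) (Mgen_realize ns ms g) (fun r c => hg0 r.1 c.1)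
          ⇑er ⇑ec er.bijective ec.bijective
        refine ⟨f, hf0, ?_⟩
        intro x hx
        simp only [Set.mem_setOf_eq, not_forall, not_le] at hx
        obtain ⟨lam, hlam⟩ := hx
        refine hfv x lam ?_
        rw [hMat]
        exact hlam

end P6

end Statement11Aux

open Statement11Aux in
/-- For `F = ℝ` and for `F = ℂ`: the set of polynomial block-matrix tuples `P` such that
`rk_ℂ P̂(λ) ≥ d` for every `λ ∈ ℂ` is generic if, and only if, `d ≤ min n m` and
(not `d = n = m`, or all degree bounds `g_{ij}` vanish). -/
theorem statement_11 (p q : ℕ) (hp : 1 ≤ p) (hq : 1 ≤ q)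
    (ns : Fin p → ℕ) (ms : Fin q → ℕ)
    (hns : ∀ i, 1 ≤ ns i) (hms : ∀ j, 1 ≤ ms j)
    (g : Fin p → Fin q → ℕ) (d : ℕ) :
    (IsGeneric {x : ((ij : Fin p × Fin q) ×
        (Fin (g ij.1 ij.2 + 1) × Fin (ns ij.1) × Fin (ms ij.2))) → ℝ |
        ∀ lam : ℂ, d ≤ (evalBlockC Complex.ofRealHom ns ms g x lam).rank} ↔
      (d ≤ min (∑ i, ns i) (∑ j, ms j) ∧
        (¬ (d = ∑ i, ns i ∧ (∑ i, ns i) = ∑ j, ms j) ∨ ∀ i j, g i j = 0))) ∧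
    (IsGeneric {x : ((ij : Fin p × Fin q) ×
        (Fin (g ij.1 ij.2 + 1) × Fin (ns ij.1) × Fin (ms ij.2))) → ℂ |
        ∀ lam : ℂ, d ≤ (evalBlockC (RingHom.id ℂ) ns ms g x lam).rank} ↔
      (d ≤ min (∑ i, ns i) (∑ j, ms j) ∧
        (¬ (d = ∑ i, ns i ∧ (∑ i, ns i) = ∑ j, ms j) ∨ ∀ i j, g i j = 0))) :=
  ⟨main ns ms g Complex.ofRealHom hp hq hns hms d,
   main ns ms g (RingHom.id ℂ) hp hq hns hms d⟩
end

section
/- Let ℓ, n, m ≥ 1 and identify Σ_{ℓ,n,m} = ℝ^{ℓ×n} × ℝ^{ℓ×n} × ℝ^{ℓ×m} with ℝ^{ℓ(2n+m)}. The set S = {(E,A,B) ∈ Σ_{ℓ,n,m} : rk [E, A, B] = rk [E, B]} (the set of freely initializable differential-algebraic systems d/dt(Ex) = Ax + Bu) is generic if, and only if, ℓ ≤ n + m. -/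
/-- Index set of the coordinates of `Σ_{ℓ,n,m} = ℝ^{ℓ×n} × ℝ^{ℓ×n} × ℝ^{ℓ×m} ≅ ℝ^{ℓ(2n+m)}`. -/
abbrev SigmaIdx (l n m : ℕ) : Type := (Fin l × Fin n) ⊕ (Fin l × Fin n) ⊕ (Fin l × Fin m)

/-- The matrix `E` of a point of `Σ_{ℓ,n,m}`. -/
def Emat {l n m : ℕ} (x : SigmaIdx l n m → ℝ) : Matrix (Fin l) (Fin n) ℝ :=
  Matrix.of fun i j => x (Sum.inl (i, j))

/-- The matrix `A` of a point of `Σ_{ℓ,n,m}`. -/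
def Amat {l n m : ℕ} (x : SigmaIdx l n m → ℝ) : Matrix (Fin l) (Fin n) ℝ :=
  Matrix.of fun i j => x (Sum.inr (Sum.inl (i, j)))

/-- The matrix `B` of a point of `Σ_{ℓ,n,m}`. -/
def Bmat {l n m : ℕ} (x : SigmaIdx l n m → ℝ) : Matrix (Fin l) (Fin m) ℝ :=
  Matrix.of fun i j => x (Sum.inr (Sum.inr (i, j)))

/-!
Both directions rest on minors of a matrix of independent variables: such a minor is a
nonzero polynomial, and off its zero set the matrix has rank at least its size.

If `ℓ ≤ n + m`, an `ℓ × ℓ` minor of `[E, B]` cuts out a proper hypersurface off which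
`rk [E, B] = ℓ`, which forces `rk [E, A, B] = ℓ` as well.

If `ℓ > n + m` (and `n ≥ 1`), an `(n + m + 1)`-minor of `[E, A, B]` is a nonzero polynomial `g`
with `rk [E, A, B] > n + m ≥ rk [E, B]` wherever `g ≠ 0`. A generic set meets every such
basic open set: if `p` is a nonzero equation of the variety containing the complement,
then `p * g ≠ 0` does not vanish identically over the infinite field `ℝ`.
-/

open Matrix MvPolynomial Function

namespace MvPolynomial

variable {ι R : Type*} [CommRing R] [IsDomain R] [Infinite R]

theorem exists_eval_ne_zero_of_ne_zero {p : MvPolynomial ι R} (hp : p ≠ 0) :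
    ∃ x, eval x p ≠ 0 := by
  by_contra! h
  exact hp (funext fun x => by simpa using h x)

end MvPolynomial

section Generic

variable {ι F : Type} [CommRing F] [IsDomain F] [Infinite F] {S : Set (ι → F)}

theorem isGeneric_of_ne_zero {p : MvPolynomial ι F} (hp : p ≠ 0)
    (hS : ∀ x, eval x p ≠ 0 → x ∈ S) : IsGeneric S := by
  refine ⟨{x | ∀ _ : Fin 1, eval x p = 0}, ⟨1, fun _ => p, rfl⟩, ?_, ?_⟩
  · obtain ⟨x, hx⟩ := exists_eval_ne_zero_of_ne_zero hp
    exact (Set.ne_univ_iff_exists_notMem _).mpr ⟨x, fun h => hx (h 0)⟩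
  · intro x hx _
    by_contra h
    exact hx (hS x h)

theorem IsGeneric.exists_mem_eval_ne_zero (hS : IsGeneric S) {g : MvPolynomial ι F}
    (hg : g ≠ 0) : ∃ x ∈ S, eval x g ≠ 0 := by
  obtain ⟨_, ⟨k, p, rfl⟩, hV, hSV⟩ := hS
  obtain ⟨y, hy⟩ := (Set.ne_univ_iff_exists_notMem _).mp hV
  obtain ⟨i, hi⟩ : ∃ i, eval y (p i) ≠ 0 := by simpa using hy
  have hpi : p i ≠ 0 := fun h => hi (by rw [h, map_zero])
  obtain ⟨x, hx⟩ := exists_eval_ne_zero_of_ne_zero (mul_ne_zero hpi hg)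
  rw [map_mul] at hx
  refine ⟨x, ?_, right_ne_zero_of_mul hx⟩
  by_contra hxS
  exact left_ne_zero_of_mul hx (hSV hxS i)

end Generic

theorem exists_ne_zero_le_rank_of_injective {ι m n R : Type*} [CommRing R] [IsDomain R]
    [Fintype m] [Fintype n] (v : m → n → ι) (hv : Injective (uncurry v)) {k : ℕ}
    (hkm : k ≤ Fintype.card m) (hkn : k ≤ Fintype.card n) :
    ∃ g : MvPolynomial ι R, g ≠ 0 ∧
      ∀ x, eval x g ≠ 0 → k ≤ (of fun i j => x (v i j)).rank := by
  obtain ⟨r⟩ : Nonempty (Fin k ↪ m) := Embedding.nonempty_of_card_le (by simpa using hkm)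
  obtain ⟨c⟩ : Nonempty (Fin k ↪ n) := Embedding.nonempty_of_card_le (by simpa using hkn)
  let w : Fin k × Fin k → ι := fun p => v (r p.1) (c p.2)
  have hw : Injective w := hv.comp (r.injective.prodMap c.injective)
  refine ⟨rename w (det (mvPolynomialX (Fin k) (Fin k) R)), ?_, fun x hx => ?_⟩
  · exact (map_ne_zero_iff _ (rename_injective w hw)).mpr (det_mvPolynomialX_ne_zero _ _)
  · rw [eval_rename, eval_det_mvPolynomialX] at hx
    have hminor : ((of fun i j => x (v i j)).submatrix r c).det ≠ 0 := hx
    calc k = ((of fun i j => x (v i j)).submatrix r c).rank := by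
          rw [rank_of_det_ne_zero hminor, Fintype.card_fin]
      _ ≤ _ := rank_submatrix_le _ _ _

section System

variable {l n m : ℕ}

/-- The coordinate of `Σ_{ℓ,n,m}` holding the entry `(i, j)` of `[E, A, B]`. -/
def sysCoord (i : Fin l) : Fin n ⊕ Fin n ⊕ Fin m → SigmaIdx l n m :=
  Sum.elim (fun j => .inl (i, j))
    (Sum.elim (fun j => .inr (.inl (i, j))) fun j => .inr (.inr (i, j)))

theorem sysCoord_injective : Injective (uncurry (sysCoord (l := l) (n := n) (m := m))) := by
  rintro ⟨i, j | j | j⟩ ⟨i', j' | j' | j'⟩ h <;> simp_all [sysCoord, Prod.ext_iff]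

theorem fromCols_Emat_Amat_Bmat_eq (x : SigmaIdx l n m → ℝ) :
    fromCols (Emat x) (fromCols (Amat x) (Bmat x)) = of fun i j => x (sysCoord i j) := by
  ext i (j | j | j) <;> rfl

theorem fromCols_Emat_Bmat_eq_submatrix (x : SigmaIdx l n m → ℝ) :
    fromCols (Emat x) (Bmat x) =
      (fromCols (Emat x) (fromCols (Amat x) (Bmat x))).submatrix id (Sum.map id .inr) := by
  ext i (j | j) <;> rfl

end System

theorem statement_14_general (l n m : ℕ) (hn : 1 ≤ n) :
    IsGeneric {x : SigmaIdx l n m → ℝ |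
        (Matrix.fromCols (Emat x) (Matrix.fromCols (Amat x) (Bmat x))).rank =
          (Matrix.fromCols (Emat x) (Bmat x)).rank} ↔
      l ≤ n + m := by
  constructor
  · intro hS
    by_contra! hlt
    obtain ⟨g, hg, hrank⟩ := exists_ne_zero_le_rank_of_injective (R := ℝ) (k := n + m + 1)
      (sysCoord (l := l) (n := n) (m := m)) sysCoord_injective (by simpa using hlt) (by simp; omega)
    obtain ⟨x, hxS, hx⟩ := hS.exists_mem_eval_ne_zero hg
    have hbig := hrank x hx
    rw [← fromCols_Emat_Amat_Bmat_eq, hxS] at hbig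
    have hsmall := (fromCols (Emat x) (Bmat x)).rank_le_card_width
    simp only [Fintype.card_sum, Fintype.card_fin] at hsmall
    omega
  · intro hle
    obtain ⟨g, hg, hrank⟩ := exists_ne_zero_le_rank_of_injective (R := ℝ) (k := l)
      (fun (i : Fin l) (j : Fin n ⊕ Fin m) => sysCoord i (Sum.map id .inr j))
      (sysCoord_injective.comp (injective_id.prodMap
        (Sum.map_injective.mpr ⟨injective_id, Sum.inr_injective⟩)))
      (by simp) (by simpa using hle)
    refine isGeneric_of_ne_zero hg fun x hx => ?_
    have hEB : l ≤ (fromCols (Emat x) (Bmat x)).rank := by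
      rw [fromCols_Emat_Bmat_eq_submatrix, fromCols_Emat_Amat_Bmat_eq]
      exact hrank x hx
    refine le_antisymm ?_ ?_
    · calc _ ≤ Fintype.card (Fin l) := rank_le_card_height _
        _ ≤ _ := by simpa using hEB
    · rw [fromCols_Emat_Bmat_eq_submatrix]
      exact rank_submatrix_le _ _ _

/-- The set of freely initializable DAE systems `d/dt(Ex) = Ax + Bu`, i.e. those with
`rk [E, A, B] = rk [E, B]`, is generic in `Σ_{ℓ,n,m}` if, and only if, `ℓ ≤ n + m`. -/
theorem statement_14 (l n m : ℕ) (hl : 1 ≤ l) (hn : 1 ≤ n) (hm : 1 ≤ m) :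
    IsGeneric {x : SigmaIdx l n m → ℝ |
        (Matrix.fromCols (Emat x) (Matrix.fromCols (Amat x) (Bmat x))).rank =
          (Matrix.fromCols (Emat x) (Bmat x)).rank} ↔
      l ≤ n + m :=
  statement_14_general l n m hn
end

section
/- Let ℓ, n, m ≥ 1 and identify Σ_{ℓ,n,m} = ℝ^{ℓ×n} × ℝ^{ℓ×n} × ℝ^{ℓ×m} with ℝ^{ℓ(2n+m)}. The set S = {(E,A,B) ∈ Σ_{ℓ,n,m} : for every Z ∈ ℝ^{n×(n−rk E)} whose image (column space) equals ker E, one has rk [E, A, B] = rk [E, AZ, B]} (the set of impulse controllable differential-algebraic systems d/dt(Ex) = Ax + Bu) is generic if, and only if, ℓ ≤ n + m. -/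
/-!
If `ℓ ≤ n + m`, a nonvanishing `ℓ`-minor of `[E, B]` forces `rk [E, A, B] = rk [E, AZ, B] = ℓ`,
so impulse controllability can only fail on the zero set of that minor.
If `ℓ > n + m`, choosing `Z` with column space `ker E` gives
`rk [E, AZ, B] ≤ rk E + (n - rk E) + m = n + m` for every system, so the impulse controllable
systems lie in the zero set of an `(n + m + 1)`-minor of `[E, A, B]` taking all columns of `E`
and `B`; a nonzero polynomial vanishing on the complement would then multiply it to a
polynomial vanishing on all of `ℝ^{ℓ(2n+m)}`, which is impossible.
-/

open Function Matrix MvPolynomial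

lemma Matrix.submatrix_fromCols_fromCols_comp_map_inr {R L C C₁ C₂ κ κ' : Type}
    (E : Matrix L C₁ R) (Y : Matrix L C R) (B : Matrix L C₂ R) (r : κ' → L) (h : κ → C₁ ⊕ C₂) :
    (fromCols E (fromCols Y B)).submatrix r (Sum.map id Sum.inr ∘ h) =
      (fromCols E B).submatrix r h := by
  ext i k
  rcases hk : h k with j | j <;> simp [hk]

section Rank

variable {K L C C₁ C₂ κ : Type} [Field K] [Fintype C] [Fintype C₁] [Fintype C₂]

lemma Matrix.card_le_rank_of_det_submatrix_ne_zero [Fintype κ] [DecidableEq κ]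
    {M : Matrix L C K} {f : κ → L} {g : κ → C} (h : (M.submatrix f g).det ≠ 0) :
    Fintype.card κ ≤ M.rank :=
  (rank_of_det_ne_zero h).symm.le.trans (rank_submatrix_le M f g)

lemma Matrix.rank_fromCols_le [Fintype L] (A : Matrix L C₁ K) (B : Matrix L C₂ K) :
    (fromCols A B).rank ≤ A.rank + B.rank := by
  have hcol : (fromCols A B).col = Sum.elim A.col B.col := by
    ext (j | j) i <;> rfl
  rw [rank_eq_finrank_span_cols, hcol, Set.Sum.elim_range, Submodule.span_union,
    rank_eq_finrank_span_cols, rank_eq_finrank_span_cols]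
  exact Submodule.finrank_add_le_finrank_add_finrank _ _

lemma Matrix.rank_fromCols_fromCols_eq_card [Fintype L] [DecidableEq L] {E : Matrix L C₁ K}
    {B : Matrix L C₂ K} {h : L → C₁ ⊕ C₂} (hdet : ((fromCols E B).submatrix id h).det ≠ 0)
    (Y : Matrix L C K) : (fromCols E (fromCols Y B)).rank = Fintype.card L := by
  refine le_antisymm (rank_le_card_height _) (card_le_rank_of_det_submatrix_ne_zero
    (f := id) (g := Sum.map id Sum.inr ∘ h) ?_)
  rwa [submatrix_fromCols_fromCols_comp_map_inr]

lemma Matrix.exists_range_mulVecLin_eq_ker {n : ℕ} (E : Matrix L (Fin n) K) :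
    ∃ Z : Matrix (Fin n) (Fin (n - E.rank)) K,
      LinearMap.range Z.mulVecLin = LinearMap.ker E.mulVecLin := by
  have hker : Module.finrank K (LinearMap.ker E.mulVecLin) = n - E.rank := by
    have := E.mulVecLin.finrank_range_add_finrank_ker
    simp only [Module.finrank_fin_fun] at this
    rw [rank]
    omega
  let b := Module.finBasisOfFinrankEq K _ hker
  refine ⟨(Matrix.of fun j => (b j : Fin n → K))ᵀ, ?_⟩
  rw [range_mulVecLin, col_transpose]
  change Submodule.span K (Set.range ((LinearMap.ker E.mulVecLin).subtype ∘ b)) = _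
  rw [Set.range_comp, Submodule.span_image, b.span_eq, Submodule.map_subtype_top]

lemma Matrix.rank_fromCols_fromCols_le [Fintype L] {n : ℕ} (E : Matrix L (Fin n) K)
    (Y : Matrix L (Fin (n - E.rank)) K) (B : Matrix L C K) :
    (fromCols E (fromCols Y B)).rank ≤ n + Fintype.card C := by
  have hE := E.rank_le_card_width
  have hY := Y.rank_le_card_width
  have hB := B.rank_le_card_width
  simp only [Fintype.card_fin] at hE hY
  have hEYB := rank_fromCols_le E (fromCols Y B)
  have hYB := rank_fromCols_le Y B
  omega

lemma Matrix.rank_le_of_forall_range_eq_ker [Fintype L] {n : ℕ} {E A : Matrix L (Fin n) K}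
    {B : Matrix L C K}
    (h : ∀ Z : Matrix (Fin n) (Fin (n - E.rank)) K,
      LinearMap.range Z.mulVecLin = LinearMap.ker E.mulVecLin →
      (fromCols E (fromCols A B)).rank = (fromCols E (fromCols (A * Z) B)).rank) :
    (fromCols E (fromCols A B)).rank ≤ n + Fintype.card C := by
  obtain ⟨Z, hZ⟩ := E.exists_range_mulVecLin_eq_ker
  exact (h Z hZ).trans_le (rank_fromCols_fromCols_le E (A * Z) B)

end Rank

lemma Matrix.exists_submatrix_eq_one {R L C κ : Type} [Zero R] [One R] [DecidableEq κ]
    {f : κ → L} {g : κ → C} (hf : f.Injective) (hg : g.Injective) :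
    ∃ M : Matrix L C R, M.submatrix f g = 1 := by
  classical
  refine ⟨Matrix.of fun i j => if ∃ k, f k = i ∧ g k = j then 1 else 0, ?_⟩
  ext k k'
  simp [one_apply, hf.eq_iff, hg.eq_iff, eq_comm]

section Generic

variable {ι F : Type} [CommRing F]

lemma isGeneric_of_eval_ne_zero_mem {S : Set (ι → F)} (q : MvPolynomial ι F)
    (hq : ∃ x₀, eval x₀ q ≠ 0) (hS : ∀ x, eval x q ≠ 0 → x ∈ S) : IsGeneric S := by
  obtain ⟨x₀, hx₀⟩ := hq
  refine ⟨{x | eval x q = 0}, ⟨1, fun _ => q, by simp⟩, fun h => hx₀ ?_, fun x hx => ?_⟩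
  · exact (h ▸ Set.mem_univ x₀ : x₀ ∈ {x | eval x q = 0})
  · by_contra hne
    exact hx (hS x hne)

/-- If the complement of `S` lay in the zero set of some nonzero `p`, then `q * p` would vanish
everywhere. -/
lemma not_isGeneric_of_forall_mem_eval_eq_zero [IsDomain F] [Infinite F] {S : Set (ι → F)}
    (q : MvPolynomial ι F) (hq : ∃ x₀, eval x₀ q ≠ 0) (hS : ∀ x ∈ S, eval x q = 0) :
    ¬ IsGeneric S := by
  rintro ⟨V, ⟨_, p, rfl⟩, hV, hSV⟩
  obtain ⟨x₀, hx₀⟩ := hq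
  obtain ⟨y₀, hy₀⟩ := Set.ne_univ_iff_exists_notMem _ |>.mp hV
  obtain ⟨i, hi⟩ : ∃ i, eval y₀ (p i) ≠ 0 := by simpa using hy₀
  have hqp : q * p i = 0 := MvPolynomial.funext fun x => by
    by_cases hx : x ∈ S
    · simp [hS x hx]
    · simp [show eval x (p i) = 0 from hSV hx i]
  rcases mul_eq_zero.mp hqp with h | h
  · exact hx₀ (by simp [h])
  · exact hi (by simp [h])

end Generic

section System

variable {l n m : ℕ}

lemma exists_eq_fromCols_Emat_Amat_Bmat (M : Matrix (Fin l) (Fin n ⊕ Fin n ⊕ Fin m) ℝ) :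
    ∃ x : SigmaIdx l n m → ℝ, fromCols (Emat x) (fromCols (Amat x) (Bmat x)) = M :=
  ⟨Sum.elim (fun p => M p.1 (.inl p.2))
    (Sum.elim (fun p => M p.1 (.inr (.inl p.2))) (fun p => M p.1 (.inr (.inr p.2)))), by
    ext i (j | j | j) <;> rfl⟩

lemma exists_eval_eq_det_submatrix_fromCols {κ : Type} [Fintype κ] [DecidableEq κ]
    {f : κ → Fin l} {g : κ → Fin n ⊕ Fin n ⊕ Fin m} (hf : f.Injective) (hg : g.Injective) :
    ∃ q : MvPolynomial (SigmaIdx l n m) ℝ, (∃ x₀, eval x₀ q ≠ 0) ∧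
      ∀ x, eval x q = ((fromCols (Emat x) (fromCols (Amat x) (Bmat x))).submatrix f g).det := by
  let P : Matrix (Fin l) (Fin n ⊕ Fin n ⊕ Fin m) (MvPolynomial (SigmaIdx l n m) ℝ) :=
    fromCols (.of fun i j => X (.inl (i, j)))
      (fromCols (.of fun i j => X (.inr (.inl (i, j)))) (.of fun i j => X (.inr (.inr (i, j)))))
  have hP : ∀ x, P.map (eval x) = fromCols (Emat x) (fromCols (Amat x) (Bmat x)) := by
    intro x
    ext i (j | j | j) <;> simp [P, Emat, Amat, Bmat]
  obtain ⟨M, hM⟩ := exists_submatrix_eq_one (R := ℝ) hf hg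
  obtain ⟨x₀, hx₀⟩ := exists_eq_fromCols_Emat_Amat_Bmat M
  refine ⟨(P.submatrix f g).det, ⟨x₀, ?_⟩, fun x => ?_⟩ <;>
    rw [RingHom.map_det, RingHom.mapMatrix_apply, ← submatrix_map, hP]
  simp [hx₀, hM]

end System

theorem statement_15_general (l n m : ℕ) (hn : 1 ≤ n) :
    IsGeneric {x : SigmaIdx l n m → ℝ |
        ∀ Z : Matrix (Fin n) (Fin (n - (Emat x).rank)) ℝ,
          LinearMap.range Z.mulVecLin = LinearMap.ker (Emat x).mulVecLin →
          (Matrix.fromCols (Emat x) (Matrix.fromCols (Amat x) (Bmat x))).rank =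
            (Matrix.fromCols (Emat x) (Matrix.fromCols (Amat x * Z) (Bmat x))).rank} ↔
      l ≤ n + m := by
  constructor
  · intro hG
    by_contra! hlt
    obtain ⟨f⟩ : Nonempty (Fin n ⊕ Unit ⊕ Fin m ↪ Fin l) :=
      Function.Embedding.nonempty_of_card_le (by simp; omega)
    let g : Fin n ⊕ Unit ⊕ Fin m → Fin n ⊕ Fin n ⊕ Fin m :=
      Sum.map id (Sum.map (fun _ => ⟨0, hn⟩) id)
    have hg : g.Injective :=
      Sum.map_injective.2 ⟨injective_id, Sum.map_injective.2 ⟨fun _ _ _ => rfl, injective_id⟩⟩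
    obtain ⟨q, hq₀, hq⟩ := exists_eval_eq_det_submatrix_fromCols f.injective hg
    refine not_isGeneric_of_forall_mem_eval_eq_zero q hq₀ (fun x hx => ?_) hG
    by_contra hne
    have hlow := card_le_rank_of_det_submatrix_ne_zero (hq x ▸ hne)
    have hup := rank_le_of_forall_range_eq_ker hx
    simp only [Fintype.card_sum, Fintype.card_fin, Fintype.card_unit] at hlow hup
    omega
  · intro hle
    let h : Fin l → Fin n ⊕ Fin m := finSumFinEquiv.symm ∘ Fin.castLE hle
    have hh : h.Injective := finSumFinEquiv.symm.injective.comp (Fin.castLE_injective hle)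
    obtain ⟨q, hq₀, hq⟩ := exists_eval_eq_det_submatrix_fromCols injective_id
      (Sum.map_injective.2 ⟨injective_id, Sum.inr_injective⟩ |>.comp hh)
    refine isGeneric_of_eval_ne_zero_mem q hq₀ fun x hx Z _ => ?_
    rw [hq, submatrix_fromCols_fromCols_comp_map_inr] at hx
    rw [rank_fromCols_fromCols_eq_card hx, rank_fromCols_fromCols_eq_card hx]

/-- The set of impulse controllable DAE systems `d/dt(Ex) = Ax + Bu`, i.e. those with
`rk [E, A, B] = rk [E, AZ, B]` for every matrix `Z ∈ ℝ^{n×(n−rk E)}` whose column space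
equals `ker E`, is generic in `Σ_{ℓ,n,m}` if, and only if, `ℓ ≤ n + m`. -/
theorem statement_15 (l n m : ℕ) (hl : 1 ≤ l) (hn : 1 ≤ n) (hm : 1 ≤ m) :
    IsGeneric {x : SigmaIdx l n m → ℝ |
        ∀ Z : Matrix (Fin n) (Fin (n - (Emat x).rank)) ℝ,
          LinearMap.range Z.mulVecLin = LinearMap.ker (Emat x).mulVecLin →
          (Matrix.fromCols (Emat x) (Matrix.fromCols (Amat x) (Bmat x))).rank =
            (Matrix.fromCols (Emat x) (Matrix.fromCols (Amat x * Z) (Bmat x))).rank} ↔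
      l ≤ n + m :=
  statement_15_general l n m hn
end

section
/- Let ℓ, n, m ≥ 1 and identify Σ_{ℓ,n,m} = ℝ^{ℓ×n} × ℝ^{ℓ×n} × ℝ^{ℓ×m} with ℝ^{ℓ(2n+m)}. The set S = {(E,A,B) ∈ Σ_{ℓ,n,m} : for every λ ∈ ℂ, rk [E, A, B] = rk [E, B] = rk_ℂ [λE − A, B]} (the set of completely controllable differential-algebraic systems d/dt(Ex) = Ax + Bu) is generic if, and only if, ℓ < n + m. -/
/-- The complex matrix `[λE − A, B] ∈ ℂ^{ℓ×(n+m)}` (real matrices viewed as complex). -/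
noncomputable def pencilC {l n m : ℕ} (E A : Matrix (Fin l) (Fin n) ℝ)
    (B : Matrix (Fin l) (Fin m) ℝ) (lam : ℂ) :
    Matrix (Fin l) (Fin n ⊕ Fin m) ℂ :=
  Matrix.fromCols
    (Matrix.of fun i j => lam * (E i j : ℂ) - (A i j : ℂ))
    (Matrix.of fun i j => (B i j : ℂ))

open Matrix Polynomial

/-!
For `ℓ < n + m` we exhibit a polynomial `q` in the entries of `(E, A, B)`, not identically zero,
whose nonvanishing forces `rk [E, B] = rk_ℂ [λE - A, B] = ℓ` for every `λ`. If `ℓ ≤ m`, `q` is an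
`ℓ × ℓ` minor of `B`. Otherwise let `k = ℓ - m` and let `d₁(λ)`, `d₂(λ)` be the maximal minors of
`[λE - A, B]` built from all columns of `B` and the columns `0, …, k - 1`, resp. `1, …, k`, of
`λE - A`; then `q` is the leading coefficient of `d₁`, which is a maximal minor of `[E, B]`, times
the resultant of `d₁` and `d₂`. A system built from the Kronecker block `L_k(λ)` has `d₁ = λ^k`
and `d₂ = 1`, hence `q ≠ 0`.

For `ℓ ≥ n + m` some nonzero polynomial vanishes on every completely controllable system, which
rules out genericity. If `ℓ > n + m` it is any `(n + m + 1)`-minor of `[E, A, B]`, since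
`rk [E, A, B] = rk [E, B] ≤ n + m`. If `ℓ = n + m` it is `det [E, B]`: when it is nonzero,
`det [λE - A, B]` has degree `n ≥ 1` in `λ`, so it has a complex root, where the pencil drops rank.
-/

theorem Matrix.fromCols_submatrix_sumMap_id_inr {R ρ ν₁ ν₂ ν₃ : Type*} (A₁ : Matrix ρ ν₁ R)
    (A₂ : Matrix ρ ν₂ R) (A₃ : Matrix ρ ν₃ R) :
    (fromCols A₁ (fromCols A₂ A₃)).submatrix id (Sum.map id Sum.inr) = fromCols A₁ A₃ := by
  ext i (j | j) <;> rfl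

section RankMinors

variable {R K ρ ν ι : Type*} [Fintype ι] [DecidableEq ι]

theorem Matrix.card_le_rank_of_det_submatrix_ne_zero_s16 [CommRing R] [IsDomain R] [Fintype ν]
    (A : Matrix ρ ν R) (f : ι → ρ) (g : ι → ν) (h : (A.submatrix f g).det ≠ 0) :
    Fintype.card ι ≤ A.rank :=
  (rank_of_det_ne_zero h).symm.le.trans (rank_submatrix_le A f g)

theorem Matrix.rank_eq_card_of_det_submatrix_ne_zero [CommRing R] [IsDomain R] [Fintype ρ]
    [Fintype ν] (A : Matrix ρ ν R) (f : ι → ρ) (g : ι → ν) (hι : Fintype.card ι = Fintype.card ρ)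
    (h : (A.submatrix f g).det ≠ 0) : A.rank = Fintype.card ρ :=
  A.rank_le_card_height.antisymm (hι ▸ A.card_le_rank_of_det_submatrix_ne_zero_s16 f g h)

theorem Matrix.det_ne_zero_of_rank_eq_card [Field K] {A : Matrix ι ι K}
    (h : A.rank = Fintype.card ι) : A.det ≠ 0 := by
  have : LinearIndependent K A.row := by
    rw [linearIndependent_iff_card_eq_finrank_span, ← h, rank_eq_finrank_span_row]
    rfl
  exact ((isUnit_iff_isUnit_det A).mp (linearIndependent_rows_iff_isUnit.mp this)).ne_zero

end RankMinors

namespace MvPolynomial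

variable {σ ι R : Type*} [CommRing R]

theorem exists_eval_ne_zero [IsDomain R] [Infinite R] {p : MvPolynomial σ R} (hp : p ≠ 0) :
    ∃ x, eval x p ≠ 0 := by
  simpa using funext_iff.not.mp hp

theorem det_of_X_ne_zero [Nontrivial R] [Fintype ι] [DecidableEq ι] {v : ι × ι → σ}
    (hv : Function.Injective v) :
    (Matrix.of fun i j => (X (v (i, j)) : MvPolynomial σ R)).det ≠ 0 := by
  have : (Matrix.of fun i j => (X (v (i, j)) : MvPolynomial σ R)) =
      (rename v).mapMatrix (mvPolynomialX ι ι R) := by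
    ext i j
    simp [mvPolynomialX]
  rw [this, ← AlgHom.map_det]
  exact (map_ne_zero_iff _ (rename_injective v hv)).mpr (det_mvPolynomialX_ne_zero ι R)

end MvPolynomial

section AlgebraicSets

open MvPolynomial

variable {ι F : Type} [CommRing F] [IsDomain F] [Infinite F] {S : Set (ι → F)}

theorem isGeneric_of_eval_ne_zero {q : MvPolynomial ι F} (hq : q ≠ 0)
    (hS : ∀ x, eval x q ≠ 0 → x ∈ S) : IsGeneric S := by
  refine ⟨{x | eval x q = 0}, ⟨1, fun _ => q, by simp⟩, fun h => ?_, fun x hx => ?_⟩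
  · obtain ⟨w, hw⟩ := exists_eval_ne_zero hq
    exact hw (h ▸ Set.mem_univ w : w ∈ {x | eval x q = 0})
  · by_contra hqx
    exact hx (hS x hqx)

theorem not_isGeneric_of_eval_eq_zero {q : MvPolynomial ι F} (hq : q ≠ 0)
    (hS : ∀ x ∈ S, eval x q = 0) : ¬ IsGeneric S := by
  rintro ⟨_, ⟨k, p, rfl⟩, hV, hSV⟩
  obtain ⟨i, hi⟩ : ∃ i, p i ≠ 0 := by
    by_contra! h
    exact hV (Set.eq_univ_of_forall fun x i => by simp [h i])
  obtain ⟨x, hx⟩ := exists_eval_ne_zero (mul_ne_zero hq hi)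
  rw [map_mul, mul_ne_zero_iff] at hx
  by_cases hxS : x ∈ S
  · exact hx.1 (hS x hxS)
  · exact hx.2 (hSV hxS i)

end AlgebraicSets

theorem Polynomial.aeval_ne_zero_or_of_resultant_ne_zero {R S : Type*} [CommRing R] [CommRing S]
    [Algebra R S] {f g : R[X]} {k : ℕ} (hk : k ≠ 0) (hf : f.natDegree ≤ k) (hg : g.natDegree ≤ k)
    (hres : algebraMap R S (f.resultant g k k) ≠ 0) (z : S) : aeval z f ≠ 0 ∨ aeval z g ≠ 0 := by
  obtain ⟨p, q, -, -, h⟩ := exists_mul_add_mul_eq_C_resultant f g hf hg (Or.inl hk)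
  by_contra! hfg
  apply hres
  simpa [hfg] using (congrArg (aeval z) h).symm

section Pencil

variable {R S ρ ν μ κ : Type*} [CommRing R] [CommRing S]

noncomputable def pencilPoly (E A : Matrix ρ ν R) (B : Matrix ρ μ R) : Matrix ρ (ν ⊕ μ) R[X] :=
  fromCols ((X : R[X]) • E.map C - A.map C) (B.map C)

theorem pencilPoly_map (φ : R →+* S) (E A : Matrix ρ ν R) (B : Matrix ρ μ R) :
    (pencilPoly E A B).map (mapRingHom φ) = pencilPoly (E.map φ) (A.map φ) (B.map φ) := by
  ext i (j | j) <;> simp [pencilPoly]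

variable [Fintype κ] [Fintype μ] [DecidableEq κ] [DecidableEq μ]

noncomputable def pencilMinor (E A : Matrix ρ ν R) (B : Matrix ρ μ R) (f : κ ⊕ μ → ρ)
    (c : κ → ν) : R[X] :=
  ((pencilPoly E A B).submatrix f (Sum.map c id)).det

theorem pencilMinor_map (φ : R →+* S) (E A : Matrix ρ ν R) (B : Matrix ρ μ R) (f : κ ⊕ μ → ρ)
    (c : κ → ν) :
    (pencilMinor E A B f c).map φ = pencilMinor (E.map φ) (A.map φ) (B.map φ) f c := by
  rw [pencilMinor, ← coe_mapRingHom, RingHom.map_det, RingHom.mapMatrix_apply, ← submatrix_map,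
    pencilPoly_map, pencilMinor]

theorem X_pow_mul_pencilMinor (E A : Matrix ρ ν R) (B : Matrix ρ μ R) (f : κ ⊕ μ → ρ)
    (c : κ → ν) :
    X ^ Fintype.card μ * pencilMinor E A B f c =
      det ((X : R[X]) • ((fromCols E B).submatrix f (Sum.map c id)).map C +
        ((fromCols (-A) 0).submatrix f (Sum.map c id)).map C) := by
  have hX : ∏ j, Sum.elim (fun _ : κ => (1 : R[X])) (fun _ : μ => X) j = X ^ Fintype.card μ := by
    simp [Fintype.prod_sum_type]
  rw [pencilMinor, ← hX, ← det_mul_row]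
  congr 1
  ext i (a | b) : 1
  · simp [pencilPoly, sub_eq_add_neg]
  · simp [pencilPoly, Matrix.add_apply]

theorem natDegree_pencilMinor_le (E A : Matrix ρ ν R) (B : Matrix ρ μ R) (f : κ ⊕ μ → ρ)
    (c : κ → ν) : (pencilMinor E A B f c).natDegree ≤ Fintype.card κ := by
  nontriviality R
  by_cases h : pencilMinor E A B f c = 0
  · simp [h]
  have := natDegree_det_X_add_C_le ((fromCols E B).submatrix f (Sum.map c id))
    ((fromCols (-A) 0).submatrix f (Sum.map c id))
  rw [← X_pow_mul_pencilMinor, natDegree_X_pow_mul _ h, Fintype.card_sum] at this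
  omega

theorem coeff_pencilMinor (E A : Matrix ρ ν R) (B : Matrix ρ μ R) (f : κ ⊕ μ → ρ) (c : κ → ν) :
    (pencilMinor E A B f c).coeff (Fintype.card κ) =
      ((fromCols E B).submatrix f (Sum.map c id)).det := by
  rw [← coeff_X_pow_mul _ (Fintype.card μ), X_pow_mul_pencilMinor, ← Fintype.card_sum,
    coeff_det_X_add_C_card]

noncomputable def minorResultant (E A : Matrix ρ ν R) (B : Matrix ρ μ R) (f : κ ⊕ μ → ρ)
    (c₁ c₂ : κ → ν) : R :=
  (pencilMinor E A B f c₁).coeff (Fintype.card κ) *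
    (pencilMinor E A B f c₁).resultant (pencilMinor E A B f c₂) (Fintype.card κ) (Fintype.card κ)

theorem minorResultant_map (φ : R →+* S) (E A : Matrix ρ ν R) (B : Matrix ρ μ R)
    (f : κ ⊕ μ → ρ) (c₁ c₂ : κ → ν) :
    φ (minorResultant E A B f c₁ c₂) =
      minorResultant (E.map φ) (A.map φ) (B.map φ) f c₁ c₂ := by
  rw [minorResultant, map_mul, ← coeff_map, ← resultant_map_map, pencilMinor_map, pencilMinor_map,
    minorResultant]

end Pencil

theorem pencilC_eq_map_aeval {l n m : ℕ} (E A : Matrix (Fin l) (Fin n) ℝ)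
    (B : Matrix (Fin l) (Fin m) ℝ) (lam : ℂ) :
    pencilC E A B lam = (pencilPoly E A B).map (aeval lam) := by
  ext i (a | b)
  · simp [pencilC, pencilPoly, mul_comm (lam : ℂ)]
  · simp [pencilC, pencilPoly]

theorem aeval_pencilMinor {l n m : ℕ} {κ : Type*} [Fintype κ] [DecidableEq κ]
    (E A : Matrix (Fin l) (Fin n) ℝ) (B : Matrix (Fin l) (Fin m) ℝ) (f : κ ⊕ Fin m → Fin l)
    (c : κ → Fin n) (lam : ℂ) :
    aeval lam (pencilMinor E A B f c) = ((pencilC E A B lam).submatrix f (Sum.map c id)).det := by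
  rw [pencilC_eq_map_aeval, submatrix_map, pencilMinor, AlgHom.map_det]
  rfl

section Controllability

variable {l n m : ℕ}

def IsCompletelyControllable (E A : Matrix (Fin l) (Fin n) ℝ) (B : Matrix (Fin l) (Fin m) ℝ) :
    Prop :=
  ∀ lam : ℂ, (fromCols E (fromCols A B)).rank = (fromCols E B).rank ∧
    (fromCols E B).rank = (pencilC E A B lam).rank

variable {E A : Matrix (Fin l) (Fin n) ℝ} {B : Matrix (Fin l) (Fin m) ℝ}

theorem isCompletelyControllable_of_rank_eq (hEB : (fromCols E B).rank = l)
    (hpencil : ∀ lam, (pencilC E A B lam).rank = l) : IsCompletelyControllable E A B := by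
  refine fun lam => ⟨le_antisymm ?_ ?_, hEB.trans (hpencil lam).symm⟩
  · simpa [hEB] using (fromCols E (fromCols A B)).rank_le_card_height
  · exact fromCols_submatrix_sumMap_id_inr E A B ▸ rank_submatrix_le _ _ _

theorem IsCompletelyControllable.rank_fromCols_le (h : IsCompletelyControllable E A B) :
    (fromCols E (fromCols A B)).rank ≤ n + m := by
  simpa [(h 0).1] using (fromCols E B).rank_le_card_width

theorem isCompletelyControllable_of_det_submatrix_ne_zero (g : Fin l → Fin m)
    (h : (B.submatrix id g).det ≠ 0) : IsCompletelyControllable E A B := by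
  refine isCompletelyControllable_of_rank_eq ?_ fun lam => ?_
  · simpa using (fromCols E B).rank_eq_card_of_det_submatrix_ne_zero id (Sum.inr ∘ g) rfl h
  · have hdet : ((pencilC E A B lam).submatrix id (Sum.inr ∘ g)).det ≠ 0 := by
      rw [show (pencilC E A B lam).submatrix id (Sum.inr ∘ g) =
        (algebraMap ℝ ℂ).mapMatrix (B.submatrix id g) from rfl, ← RingHom.map_det]
      simpa using h
    simpa using (pencilC E A B lam).rank_eq_card_of_det_submatrix_ne_zero id _ rfl hdet

theorem isCompletelyControllable_of_minorResultant_ne_zero {k : ℕ} (hk : k ≠ 0)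
    (e : Fin k ⊕ Fin m ≃ Fin l) (c₁ c₂ : Fin k → Fin n)
    (h : minorResultant E A B e c₁ c₂ ≠ 0) : IsCompletelyControllable E A B := by
  have hcard : Fintype.card (Fin k ⊕ Fin m) = Fintype.card (Fin l) := Fintype.card_congr e
  rw [minorResultant, mul_ne_zero_iff, coeff_pencilMinor] at h
  obtain ⟨hlead, hres⟩ := h
  have hdeg := natDegree_pencilMinor_le E A B e
  simp only [Fintype.card_fin] at hdeg hres
  refine isCompletelyControllable_of_rank_eq ?_ fun lam => ?_
  · simpa using (fromCols E B).rank_eq_card_of_det_submatrix_ne_zero e _ hcard hlead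
  · obtain hd | hd := aeval_ne_zero_or_of_resultant_ne_zero (S := ℂ) hk (hdeg c₁) (hdeg c₂)
      (by simpa using hres) lam
    all_goals
      rw [aeval_pencilMinor] at hd
      simpa using (pencilC E A B lam).rank_eq_card_of_det_submatrix_ne_zero e _ hcard hd

theorem IsCompletelyControllable.det_submatrix_eq_zero (h : IsCompletelyControllable E A B)
    (hn : 0 < n) (e : Fin n ⊕ Fin m ≃ Fin l) :
    ((fromCols E B).submatrix e id).det = 0 := by
  by_contra hdet
  have hlead := coeff_pencilMinor E A B e id
  rw [Sum.map_id_id, Fintype.card_fin] at hlead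
  have hdeg : (pencilMinor E A B e id).degree ≠ 0 := fun h0 =>
    hdet (by rw [← hlead, eq_C_of_degree_eq_zero h0, coeff_C, if_neg hn.ne'])
  obtain ⟨lam, hlam⟩ := IsAlgClosed.exists_aeval_eq_zero ℂ _ hdeg
  rw [aeval_pencilMinor, Sum.map_id_id] at hlam
  have hcard : Fintype.card (Fin n ⊕ Fin m) = Fintype.card (Fin l) := Fintype.card_congr e
  have hrank := (fromCols E B).rank_eq_card_of_det_submatrix_ne_zero e id hcard hdet
  rw [(h lam).2, ← rank_submatrix _ e (Equiv.refl _), ← hcard] at hrank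
  exact det_ne_zero_of_rank_eq_card hrank hlam

end Controllability

section GenericSystem

open MvPolynomial

variable {l n m : ℕ}

def sigmaCoord (l n m : ℕ) : Fin l × (Fin n ⊕ Fin n ⊕ Fin m) ≃ SigmaIdx l n m :=
  (Equiv.prodSumDistrib _ _ _).trans ((Equiv.refl _).sumCongr (Equiv.prodSumDistrib _ _ _))

def sigmaPoint (E A : Matrix (Fin l) (Fin n) ℝ) (B : Matrix (Fin l) (Fin m) ℝ) :
    SigmaIdx l n m → ℝ :=
  Sum.elim (fun p => E p.1 p.2) (Sum.elim (fun p => A p.1 p.2) (fun p => B p.1 p.2))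

noncomputable def genericEAB (l n m : ℕ) :
    Matrix (Fin l) (Fin n ⊕ Fin n ⊕ Fin m) (MvPolynomial (SigmaIdx l n m) ℝ) :=
  of fun i c => X (sigmaCoord l n m (i, c))

theorem genericEAB_map_eval (x : SigmaIdx l n m → ℝ) :
    (genericEAB l n m).map (eval x) = fromCols (Emat x) (fromCols (Amat x) (Bmat x)) := by
  ext i (a | a | b) <;> simp [genericEAB, sigmaCoord, Emat, Amat, Bmat]

theorem eval_det_genericEAB_submatrix {ι : Type*} [Fintype ι] [DecidableEq ι]
    (x : SigmaIdx l n m → ℝ) (f : ι → Fin l) (g : ι → Fin n ⊕ Fin n ⊕ Fin m) :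
    eval x ((genericEAB l n m).submatrix f g).det =
      ((fromCols (Emat x) (fromCols (Amat x) (Bmat x))).submatrix f g).det := by
  rw [RingHom.map_det, RingHom.mapMatrix_apply, ← submatrix_map, genericEAB_map_eval]

theorem det_genericEAB_submatrix_ne_zero {ι : Type*} [Fintype ι] [DecidableEq ι]
    {f : ι → Fin l} {g : ι → Fin n ⊕ Fin n ⊕ Fin m} (hf : Function.Injective f)
    (hg : Function.Injective g) : ((genericEAB l n m).submatrix f g).det ≠ 0 :=
  show (of fun i j => X ((sigmaCoord l n m ∘ Prod.map f g) (i, j))).det ≠ 0 from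
    det_of_X_ne_zero ((sigmaCoord l n m).injective.comp (hf.prodMap hg))

noncomputable def genericE (l n m : ℕ) : Matrix (Fin l) (Fin n) (MvPolynomial (SigmaIdx l n m) ℝ) :=
  (genericEAB l n m).submatrix id Sum.inl

noncomputable def genericA (l n m : ℕ) : Matrix (Fin l) (Fin n) (MvPolynomial (SigmaIdx l n m) ℝ) :=
  (genericEAB l n m).submatrix id (Sum.inr ∘ Sum.inl)

noncomputable def genericB (l n m : ℕ) : Matrix (Fin l) (Fin m) (MvPolynomial (SigmaIdx l n m) ℝ) :=
  (genericEAB l n m).submatrix id (Sum.inr ∘ Sum.inr)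

theorem eval_minorResultant_generic {k : ℕ} (x : SigmaIdx l n m → ℝ) (f : Fin k ⊕ Fin m → Fin l)
    (c₁ c₂ : Fin k → Fin n) :
    eval x (minorResultant (genericE l n m) (genericA l n m) (genericB l n m) f c₁ c₂) =
      minorResultant (Emat x) (Amat x) (Bmat x) f c₁ c₂ := by
  rw [minorResultant_map, genericE, genericA, genericB, ← submatrix_map, ← submatrix_map,
    ← submatrix_map, genericEAB_map_eval]
  rfl

end GenericSystem

section Kronecker

variable {k l n m : ℕ} (e : Fin k ⊕ Fin m ≃ Fin l) (ι : Fin (k + 1) ↪ Fin n)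

-- Up to the row order `e`, the pencil of this system is `diag(L_k(λ), I_m)` on the columns `ι`,
-- where `L_k(λ)` is the `k × (k + 1)` Kronecker block with `λ` on the diagonal and `1` above it.
def kroneckerE : Matrix (Fin l) (Fin n) ℝ :=
  (fromRows (of fun r j => if j = ι r.castSucc then 1 else 0) 0).submatrix e.symm id

def kroneckerA : Matrix (Fin l) (Fin n) ℝ :=
  -(fromRows (of fun r j => if j = ι r.succ then 1 else 0) 0).submatrix e.symm id

def kroneckerB : Matrix (Fin l) (Fin m) ℝ :=
  (fromRows 0 1).submatrix e.symm id

theorem pencilPoly_kronecker_submatrix (c : Fin k → Fin n) :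
    (pencilPoly (kroneckerE e ι) (kroneckerA e ι) (kroneckerB e)).submatrix e (Sum.map c id) =
      fromBlocks (of fun r a => (if c a = ι r.castSucc then X else 0) +
        if c a = ι r.succ then 1 else 0) 0 0 1 := by
  ext (r | r) (a | b) : 1 <;>
    simp [pencilPoly, kroneckerE, kroneckerA, kroneckerB, one_apply, apply_ite C]

theorem pencilMinor_kronecker_castSucc :
    pencilMinor (kroneckerE e ι) (kroneckerA e ι) (kroneckerB e) e (ι ∘ Fin.castSucc) = X ^ k := by
  rw [pencilMinor, pencilPoly_kronecker_submatrix, det_fromBlocks_zero₂₁, det_one, mul_one,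
    det_of_isUpperTriangular]
  · simp [Fin.ext_iff]
  · intro r a (har : (a : ℕ) < r)
    simp [Fin.ext_iff, har.ne, (har.trans (Nat.lt_succ_self _)).ne]

theorem pencilMinor_kronecker_succ :
    pencilMinor (kroneckerE e ι) (kroneckerA e ι) (kroneckerB e) e (ι ∘ Fin.succ) = 1 := by
  rw [pencilMinor, pencilPoly_kronecker_submatrix, det_fromBlocks_zero₂₁, det_one, mul_one,
    det_of_isLowerTriangular]
  · simp [Fin.ext_iff]
  · intro r a (hra : (r : ℕ) < a)
    simp [Fin.ext_iff, hra.ne', (hra.trans (Nat.lt_succ_self _)).ne']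

theorem minorResultant_kronecker :
    minorResultant (kroneckerE e ι) (kroneckerA e ι) (kroneckerB e) e (ι ∘ Fin.castSucc)
      (ι ∘ Fin.succ) = 1 := by
  rw [minorResultant, pencilMinor_kronecker_castSucc, pencilMinor_kronecker_succ, Fintype.card_fin,
    resultant_X_pow_left _ _ _ (by simp)]
  simp

end Kronecker

section ControllableSet

open MvPolynomial

variable {l n m : ℕ}

abbrev controllableSet (l n m : ℕ) : Set (SigmaIdx l n m → ℝ) :=
  {x | IsCompletelyControllable (Emat x) (Amat x) (Bmat x)}

theorem isGeneric_controllableSet_of_le (h : l ≤ m) : IsGeneric (controllableSet l n m) := by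
  have hcols : Function.Injective (Sum.inr ∘ Sum.inr ∘ Fin.castLE h :
      Fin l → Fin n ⊕ Fin n ⊕ Fin m) :=
    Sum.inr_injective.comp (Sum.inr_injective.comp (Fin.castLE_injective h))
  refine isGeneric_of_eval_ne_zero (det_genericEAB_submatrix_ne_zero Function.injective_id hcols)
    fun x hx => ?_
  rw [eval_det_genericEAB_submatrix] at hx
  exact isCompletelyControllable_of_det_submatrix_ne_zero (Fin.castLE h) hx

theorem not_isGeneric_controllableSet_of_add_lt (hn : 0 < n) (h : n + m < l) :
    ¬ IsGeneric (controllableSet l n m) := by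
  obtain ⟨rows⟩ : Nonempty (Option (Fin n ⊕ Fin m) ↪ Fin l) :=
    Function.Embedding.nonempty_of_card_le (by simpa using h)
  let cols : Option (Fin n ⊕ Fin m) → Fin n ⊕ Fin n ⊕ Fin m :=
    fun o => o.elim (Sum.inr (Sum.inl ⟨0, hn⟩)) (Sum.map id Sum.inr)
  have hcols : Function.Injective cols := by
    rintro (_ | a | b) (_ | a' | b') h <;> simp_all [cols]
  refine not_isGeneric_of_eval_eq_zero (det_genericEAB_submatrix_ne_zero rows.injective hcols)
    fun x hx => ?_
  rw [eval_det_genericEAB_submatrix]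
  by_contra hdet
  have hge := (fromCols (Emat x) (fromCols (Amat x) (Bmat x))).card_le_rank_of_det_submatrix_ne_zero_s16
    rows cols hdet
  simp only [Fintype.card_option, Fintype.card_sum, Fintype.card_fin] at hge
  exact absurd (hge.trans hx.rank_fromCols_le) (by omega)

theorem not_isGeneric_controllableSet_of_add_eq (hn : 0 < n) (h : n + m = l) :
    ¬ IsGeneric (controllableSet l n m) := by
  let e : Fin n ⊕ Fin m ≃ Fin l := finSumFinEquiv.trans (finCongr h)
  have hcols : Function.Injective (Sum.map id Sum.inr : Fin n ⊕ Fin m → Fin n ⊕ Fin n ⊕ Fin m) :=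
    Sum.map_injective.mpr ⟨Function.injective_id, Sum.inr_injective⟩
  refine not_isGeneric_of_eval_eq_zero (det_genericEAB_submatrix_ne_zero e.injective hcols)
    fun x hx => ?_
  rw [eval_det_genericEAB_submatrix]
  have := hx.det_submatrix_eq_zero hn e
  rwa [← fromCols_submatrix_sumMap_id_inr _ (Amat x), submatrix_submatrix] at this

theorem isGeneric_controllableSet_of_lt_of_lt (h₁ : m < l) (h₂ : l < n + m) :
    IsGeneric (controllableSet l n m) := by
  have hkm : l - m + m = l := Nat.sub_add_cancel h₁.le
  let e : Fin (l - m) ⊕ Fin m ≃ Fin l := finSumFinEquiv.trans (finCongr hkm)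
  let ι : Fin (l - m + 1) ↪ Fin n := Fin.castLEEmb (by omega)
  let q := minorResultant (genericE l n m) (genericA l n m) (genericB l n m) e
    (ι ∘ Fin.castSucc) (ι ∘ Fin.succ)
  have hw : eval (sigmaPoint (kroneckerE e ι) (kroneckerA e ι) (kroneckerB e)) q = 1 :=
    (eval_minorResultant_generic _ _ _ _).trans (minorResultant_kronecker e ι)
  refine isGeneric_of_eval_ne_zero (q := q) (fun hq => by simp [hq] at hw) fun x hx => ?_
  rw [eval_minorResultant_generic] at hx
  exact isCompletelyControllable_of_minorResultant_ne_zero (by omega) e _ _ hx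

end ControllableSet

theorem statement_16_general (l n m : ℕ) (hn : 1 ≤ n) :
    IsGeneric {x : SigmaIdx l n m → ℝ |
        ∀ lam : ℂ,
          (Matrix.fromCols (Emat x) (Matrix.fromCols (Amat x) (Bmat x))).rank =
            (Matrix.fromCols (Emat x) (Bmat x)).rank ∧
          (Matrix.fromCols (Emat x) (Bmat x)).rank =
            (pencilC (Emat x) (Amat x) (Bmat x) lam).rank} ↔
      l < n + m := by
  change IsGeneric (controllableSet l n m) ↔ l < n + m
  refine ⟨fun hgen => ?_, fun h => ?_⟩
  · by_contra! hle
    rcases hle.eq_or_lt with heq | hlt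
    · exact not_isGeneric_controllableSet_of_add_eq hn heq hgen
    · exact not_isGeneric_controllableSet_of_add_lt hn hlt hgen
  · rcases le_or_gt l m with hlm | hml
    · exact isGeneric_controllableSet_of_le hlm
    · exact isGeneric_controllableSet_of_lt_of_lt hml h

/-- The set of completely controllable DAE systems `d/dt(Ex) = Ax + Bu`, i.e. those with
`rk [E, A, B] = rk [E, B] = rk_ℂ [λE − A, B]` for every `λ ∈ ℂ`, is generic in
`Σ_{ℓ,n,m}` if, and only if, `ℓ < n + m`. -/
theorem statement_16 (l n m : ℕ) (hl : 1 ≤ l) (hn : 1 ≤ n) (hm : 1 ≤ m) :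
    IsGeneric {x : SigmaIdx l n m → ℝ |
        ∀ lam : ℂ,
          (Matrix.fromCols (Emat x) (Matrix.fromCols (Amat x) (Bmat x))).rank =
            (Matrix.fromCols (Emat x) (Bmat x)).rank ∧
          (Matrix.fromCols (Emat x) (Bmat x)).rank =
            (pencilC (Emat x) (Amat x) (Bmat x) lam).rank} ↔
      l < n + m :=
  statement_16_general l n m hn
end

section
/- Let ℓ, n, m ≥ 1 and identify Σ_{ℓ,n,m} = ℝ^{ℓ×n} × ℝ^{ℓ×n} × ℝ^{ℓ×m} with ℝ^{ℓ(2n+m)}. The set S = {(E,A,B) ∈ Σ_{ℓ,n,m} : for every λ ∈ ℂ with Re λ ≥ 0, rk [E, A, B] = rk [E, B] = rk_ℂ [λE − A, B]} (the set of completely stabilizable differential-algebraic systems d/dt(Ex) = Ax + Bu) is generic if, and only if, ℓ < n + m. -/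
open Polynomial

namespace Matrix

variable {α β K : Type*} [Fintype α] [DecidableEq α] [Field K]

theorem rank_eq_card_iff_det_ne_zero (M : Matrix α α K) :
    M.rank = Fintype.card α ↔ M.det ≠ 0 := by
  refine ⟨fun h => ?_, rank_of_det_ne_zero⟩
  have hrange : LinearMap.range M.mulVecLin = ⊤ :=
    Submodule.eq_top_of_finrank_eq (by rw [← rank, h, Module.finrank_fintype_fun_eq_card])
  have hunit : IsUnit M := mulVec_surjective_iff_isUnit.mp (LinearMap.range_eq_top.mp hrange)
  exact ((isUnit_iff_isUnit_det M).mp hunit).ne_zero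

theorem rank_eq_card_iff_det_submatrix_ne_zero [Fintype β] (M : Matrix α β K) (e : α ≃ β) :
    M.rank = Fintype.card α ↔ (M.submatrix id e).det ≠ 0 := by
  rw [← rank_eq_card_iff_det_ne_zero, ← M.rank_submatrix (Equiv.refl α) e]
  rfl

theorem rank_eq_card_of_det_submatrix_ne_zero_s19 [Fintype β] (M : Matrix α β K) (c : α → β)
    (h : (M.submatrix id c).det ≠ 0) : M.rank = Fintype.card α :=
  le_antisymm M.rank_le_card_height (rank_of_det_ne_zero h ▸ M.rank_submatrix_le id c)

end Matrix

theorem Matrix.exists_submatrix_eq_one_s19 {τ α β R : Type*} [DecidableEq τ] [Nonempty τ] [Zero R]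
    [One R] {ρ : τ → α} {c : τ → β} (hρ : ρ.Injective) (hc : c.Injective) :
    ∃ M : Matrix α β R, M.submatrix ρ c = 1 :=
  ⟨(1 : Matrix τ τ R).submatrix (Function.invFun ρ) (Function.invFun c), by
    rw [submatrix_submatrix, Function.invFun_comp hρ, Function.invFun_comp hc, submatrix_id_id]⟩

theorem RingHom.map_det_submatrix {α β γ R S : Type*} [Fintype γ] [DecidableEq γ] [CommRing R]
    [CommRing S] (f : R →+* S) (M : Matrix α β R) (r : γ → α) (c : γ → β) :
    f (M.submatrix r c).det = ((M.map f).submatrix r c).det := by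
  rw [f.map_det, RingHom.mapMatrix_apply, Matrix.submatrix_map]

@[fun_prop] theorem Continuous.matrix_fromCols {X ι κ μ R : Type*} [TopologicalSpace X]
    [TopologicalSpace R] {A : X → Matrix ι κ R} {B : X → Matrix ι μ R} (hA : Continuous A)
    (hB : Continuous B) : Continuous fun x => Matrix.fromCols (A x) (B x) :=
  continuous_matrix fun i j => j.casesOn (hA.matrix_elem i) (hB.matrix_elem i)

namespace Polynomial

theorem natDegree_det_le_of_natDegree_le {R α : Type*} [CommRing R] [Fintype α] [DecidableEq α]
    (M : Matrix α α R[X]) (w : α → ℕ) (hM : ∀ i j, (M i j).natDegree ≤ w j) :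
    M.det.natDegree ≤ ∑ j, w j := by
  rw [Matrix.det_apply']
  refine natDegree_sum_le_of_forall_le _ _ fun σ _ => natDegree_mul_le.trans ?_
  rw [natDegree_intCast, zero_add]
  exact (natDegree_prod_le _ _).trans (Finset.sum_le_sum fun j _ => hM (σ j) j)

theorem eval_ne_zero_or_eval_ne_zero_of_resultant_ne_zero {R : Type*} [CommRing R] {f g : R[X]}
    {a b : ℕ} (hf : f.natDegree ≤ a) (hg : g.natDegree ≤ b) (hab : a ≠ 0 ∨ b ≠ 0)
    (hres : resultant f g a b ≠ 0) (r : R) : f.eval r ≠ 0 ∨ g.eval r ≠ 0 := by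
  obtain ⟨p, q, -, -, hpq⟩ := exists_mul_add_mul_eq_C_resultant f g hf hg hab
  by_contra! h
  apply hres
  simpa [h.1, h.2] using congrArg (eval r) hpq.symm

end Polynomial

theorem Matrix.rank_map_eval₂_eq_card_of_resultant_ne_zero {α β R L : Type*} [Fintype α]
    [DecidableEq α] [Fintype β] [CommRing R] [Field L] (φ : R →+* L) (M : Matrix α β R[X])
    (c₁ c₂ : α → β) {a b : ℕ} (ha : (M.submatrix id c₁).det.natDegree ≤ a)
    (hb : (M.submatrix id c₂).det.natDegree ≤ b) (hab : a ≠ 0 ∨ b ≠ 0)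
    (hres : φ (resultant (M.submatrix id c₁).det (M.submatrix id c₂).det a b) ≠ 0) (z : L) :
    (M.map (eval₂RingHom φ z)).rank = Fintype.card α := by
  have hminor (c : α → β) :
      ((M.submatrix id c).det.map φ).eval z = ((M.map (eval₂RingHom φ z)).submatrix id c).det := by
    rw [eval_map, ← coe_eval₂RingHom, RingHom.map_det_submatrix]
  rw [← resultant_map_map] at hres
  rcases eval_ne_zero_or_eval_ne_zero_of_resultant_ne_zero (natDegree_map_le.trans ha)
    (natDegree_map_le.trans hb) hab hres z with h | h
  · exact rank_eq_card_of_det_submatrix_ne_zero_s19 _ c₁ (hminor c₁ ▸ h)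
  · exact rank_eq_card_of_det_submatrix_ne_zero_s19 _ c₂ (hminor c₂ ▸ h)

theorem MvPolynomial.eval_eq_zero_of_forall_mem_isOpen {σ 𝕜 : Type*} [Fintype σ]
    [NontriviallyNormedField 𝕜] [CompleteSpace 𝕜] [PreconnectedSpace 𝕜] {U : Set (σ → 𝕜)}
    (hU : IsOpen U) {x₀ : σ → 𝕜} (hx₀ : x₀ ∈ U) {p : MvPolynomial σ 𝕜}
    (hp : ∀ x ∈ U, eval x p = 0) (x : σ → 𝕜) : eval x p = 0 :=
  (AnalyticOnNhd.eval_mvPolynomial p).eqOn_zero_of_preconnected_of_eventuallyEq_zero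
    isPreconnected_univ (Set.mem_univ x₀) (Filter.eventuallyEq_of_mem (hU.mem_nhds hx₀) hp)
    (Set.mem_univ x)

theorem isGeneric_of_eval_ne_zero_s19 {ι F : Type} [CommRing F] {S : Set (ι → F)}
    {p : MvPolynomial ι F} {x₀ : ι → F} (hx₀ : MvPolynomial.eval x₀ p ≠ 0)
    (hS : ∀ x, MvPolynomial.eval x p ≠ 0 → x ∈ S) : IsGeneric S := by
  refine ⟨{x | ∀ i : Fin 1, MvPolynomial.eval x (![p] i) = 0}, ⟨1, ![p], rfl⟩,
    fun hV => hx₀ ?_, fun x hx => ?_⟩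
  · simpa using Set.eq_univ_iff_forall.mp hV x₀ 0
  · simpa using not_imp_comm.mp (hS x) hx

theorem not_isGeneric_of_isOpen {σ 𝕜 : Type} [Fintype σ] [NontriviallyNormedField 𝕜]
    [CompleteSpace 𝕜] [PreconnectedSpace 𝕜] {S U : Set (σ → 𝕜)} (hU : IsOpen U)
    (hne : U.Nonempty) (hUS : U ⊆ Sᶜ) : ¬ IsGeneric S := by
  rintro ⟨V, ⟨k, p, rfl⟩, hV, hSV⟩
  obtain ⟨x₀, hx₀⟩ := hne
  refine hV (Set.eq_univ_of_forall fun x i => ?_)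
  exact MvPolynomial.eval_eq_zero_of_forall_mem_isOpen hU hx₀ (fun y hy => hSV (hUS hy) i) x

open Matrix

namespace DAE

variable {l n m : ℕ}

def CompletelyStabilizable (x : SigmaIdx l n m → ℝ) : Prop :=
  ∀ lam : ℂ, 0 ≤ lam.re →
    (fromCols (Emat x) (fromCols (Amat x) (Bmat x))).rank = (fromCols (Emat x) (Bmat x)).rank ∧
    (fromCols (Emat x) (Bmat x)).rank = (pencilC (Emat x) (Amat x) (Bmat x) lam).rank

def ofMatrices (E A : Matrix (Fin l) (Fin n) ℝ) (B : Matrix (Fin l) (Fin m) ℝ) :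
    SigmaIdx l n m → ℝ :=
  Sum.elim (fun p => E p.1 p.2) (Sum.elim (fun p => A p.1 p.2) (fun p => B p.1 p.2))

@[simp] theorem Emat_ofMatrices (E A : Matrix (Fin l) (Fin n) ℝ) (B : Matrix (Fin l) (Fin m) ℝ) :
    Emat (ofMatrices E A B) = E := rfl

@[simp] theorem Amat_ofMatrices (E A : Matrix (Fin l) (Fin n) ℝ) (B : Matrix (Fin l) (Fin m) ℝ) :
    Amat (ofMatrices E A B) = A := rfl

@[simp] theorem Bmat_ofMatrices (E A : Matrix (Fin l) (Fin n) ℝ) (B : Matrix (Fin l) (Fin m) ℝ) :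
    Bmat (ofMatrices E A B) = B := rfl

@[fun_prop] theorem continuous_Emat : Continuous (Emat : (SigmaIdx l n m → ℝ) → _) :=
  continuous_pi fun _ => continuous_pi fun _ => continuous_apply _

@[fun_prop] theorem continuous_Amat : Continuous (Amat : (SigmaIdx l n m → ℝ) → _) :=
  continuous_pi fun _ => continuous_pi fun _ => continuous_apply _

@[fun_prop] theorem continuous_Bmat : Continuous (Bmat : (SigmaIdx l n m → ℝ) → _) :=
  continuous_pi fun _ => continuous_pi fun _ => continuous_apply _

noncomputable def pencil {ι κ μ R : Type*} [CommRing R] (E A : Matrix ι κ R) (B : Matrix ι μ R) :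
    Matrix ι (κ ⊕ μ) R[X] :=
  fromCols (of fun i j => C (E i j) * X - C (A i j)) (B.map C)

theorem pencil_map {ι κ μ R S : Type*} [CommRing R] [CommRing S] (f : R →+* S)
    (E A : Matrix ι κ R) (B : Matrix ι μ R) :
    (pencil E A B).map (mapRingHom f) = pencil (E.map f) (A.map f) (B.map f) := by
  ext i (j | j) <;> simp [pencil]

theorem pencilC_eq_map_pencil (E A : Matrix (Fin l) (Fin n) ℝ) (B : Matrix (Fin l) (Fin m) ℝ)
    (z : ℂ) : pencilC E A B z = (pencil E A B).map (eval₂RingHom Complex.ofRealHom z) := by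
  ext i (j | j) <;> simp [pencilC, pencil, mul_comm z]

/-- Columns `s, …, s + l - m - 1` of `λE − A`, then the first `min l m` columns of `B`. -/
def pencilCols (s : ℕ) (h : l + s ≤ n + m) : Fin l → Fin n ⊕ Fin m := fun t =>
  if ht : (t : ℕ) < l - m then .inl ⟨t + s, by omega⟩ else .inr ⟨t - (l - m), by omega⟩

theorem natDegree_det_pencil_submatrix_le {R : Type*} [CommRing R]
    (E A : Matrix (Fin l) (Fin n) R) (B : Matrix (Fin l) (Fin m) R) (s : ℕ)
    (h : l + s ≤ n + m) : ((pencil E A B).submatrix id (pencilCols s h)).det.natDegree ≤ l - m := by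
  refine (natDegree_det_le_of_natDegree_le _ (fun t : Fin l => if (t : ℕ) < l - m then 1 else 0)
    fun i t => ?_).trans ?_
  · simp only [submatrix_apply, id_eq, pencilCols]
    split_ifs
    · simpa [pencil, sub_eq_add_neg] using natDegree_linear_le (a := E i _) (b := -A i _)
    · simp [pencil]
  · simp [Finset.sum_boole, Fin.card_filter_val_lt]

noncomputable def univE : Matrix (Fin l) (Fin n) (MvPolynomial (SigmaIdx l n m) ℝ) :=
  of fun i j => .X (.inl (i, j))

noncomputable def univA : Matrix (Fin l) (Fin n) (MvPolynomial (SigmaIdx l n m) ℝ) :=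
  of fun i j => .X (.inr (.inl (i, j)))

noncomputable def univB : Matrix (Fin l) (Fin m) (MvPolynomial (SigmaIdx l n m) ℝ) :=
  of fun i j => .X (.inr (.inr (i, j)))

@[simp] theorem univE_map_eval (x : SigmaIdx l n m → ℝ) :
    univE.map (MvPolynomial.eval x) = Emat x := by
  ext; simp [univE, Emat]

@[simp] theorem univA_map_eval (x : SigmaIdx l n m → ℝ) :
    univA.map (MvPolynomial.eval x) = Amat x := by
  ext; simp [univA, Amat]

@[simp] theorem univB_map_eval (x : SigmaIdx l n m → ℝ) :
    univB.map (MvPolynomial.eval x) = Bmat x := by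
  ext; simp [univB, Bmat]

/-- The formal degree `l + 1` of the second minor is positive even when `l ≤ m`, as
`Polynomial.exists_mul_add_mul_eq_C_resultant` requires. -/
noncomputable def stabilityCertificate (h : l < n + m) : MvPolynomial (SigmaIdx l n m) ℝ :=
  resultant ((pencil univE univA univB).submatrix id (pencilCols 0 (by omega))).det
      ((pencil univE univA univB).submatrix id (pencilCols 1 h)).det (l - m) (l + 1) *
    ((fromCols univE univB).submatrix id (pencilCols 0 (by omega))).det

theorem eval_stabilityCertificate (h : l < n + m) (x : SigmaIdx l n m → ℝ) :
    MvPolynomial.eval x (stabilityCertificate h) =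
      resultant ((pencil (Emat x) (Amat x) (Bmat x)).submatrix id (pencilCols 0 (by omega))).det
        ((pencil (Emat x) (Amat x) (Bmat x)).submatrix id (pencilCols 1 h)).det
        (l - m) (l + 1) *
      ((fromCols (Emat x) (Bmat x)).submatrix id (pencilCols 0 (by omega))).det := by
  rw [stabilityCertificate, map_mul, ← resultant_map_map, ← coe_mapRingHom,
    RingHom.map_det_submatrix, RingHom.map_det_submatrix, RingHom.map_det_submatrix, pencil_map,
    fromCols_map, univE_map_eval, univA_map_eval, univB_map_eval]

theorem completelyStabilizable_of_eval_ne_zero (h : l < n + m) (x : SigmaIdx l n m → ℝ)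
    (hx : MvPolynomial.eval x (stabilityCertificate h) ≠ 0) : CompletelyStabilizable x := by
  rw [eval_stabilityCertificate, mul_ne_zero_iff] at hx
  obtain ⟨hres, hEB⟩ := hx
  have hrankEB : (fromCols (Emat x) (Bmat x)).rank = l := by
    simpa using rank_eq_card_of_det_submatrix_ne_zero_s19 _ _ hEB
  have hrankEAB : (fromCols (Emat x) (fromCols (Amat x) (Bmat x))).rank = l := by
    have hsub : (fromCols (Emat x) (fromCols (Amat x) (Bmat x))).submatrix id (Sum.map id .inr) =
        fromCols (Emat x) (Bmat x) := by
      ext i (j | j) <;> rfl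
    refine le_antisymm ?_ ?_
    · simpa using rank_le_card_height (fromCols (Emat x) (fromCols (Amat x) (Bmat x)))
    · calc l = _ := hrankEB.symm
        _ = _ := by rw [← hsub]
        _ ≤ _ := rank_submatrix_le _ _ _
  intro z _
  refine ⟨hrankEAB.trans hrankEB.symm, ?_⟩
  have hrankP := rank_map_eval₂_eq_card_of_resultant_ne_zero Complex.ofRealHom _ _ _ (b := l + 1)
    (natDegree_det_pencil_submatrix_le (Emat x) (Amat x) (Bmat x) 0 (by omega))
    ((natDegree_det_pencil_submatrix_le (Emat x) (Amat x) (Bmat x) 1 h).trans (by omega))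
    (Or.inr (by omega)) (by simpa using hres) z
  rw [hrankEB, pencilC_eq_map_pencil, hrankP, Fintype.card_fin]

/-- At this point `[λE − A, B]` restricted to `pencilCols 0` is upper triangular with diagonal
`λ, …, λ, 1, …, 1`, and restricted to `pencilCols 1` it is lower triangular with diagonal
`-1, …, -1, 1, …, 1`. -/
def shiftWitness (l n m : ℕ) : SigmaIdx l n m → ℝ :=
  ofMatrices (of fun i j => if (i : ℕ) = j ∧ (j : ℕ) < l - m then 1 else 0)
    (of fun i j => if (i : ℕ) + 1 = j ∧ (j : ℕ) ≤ l - m then 1 else 0)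
    (of fun i j => if (i : ℕ) = l - m + j then 1 else 0)

theorem det_pencil_shiftWitness_zero (h : l ≤ n + m) :
    ((pencil (Emat (shiftWitness l n m)) (Amat (shiftWitness l n m))
      (Bmat (shiftWitness l n m))).submatrix id (pencilCols 0 h)).det = X ^ (l - m) := by
  rw [det_of_isUpperTriangular]
  · calc _ = ∏ t : Fin l, if (t : ℕ) < l - m then (X : ℝ[X]) else 1 := by
          refine Finset.prod_congr rfl fun t _ => ?_
          simp only [submatrix_apply, id_eq, pencilCols]
          split_ifs <;> simp [pencil, shiftWitness] <;> omega
      _ = X ^ (l - m) := by simp [Finset.prod_ite, Fin.card_filter_val_lt]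
  · intro i t hti
    have h₁ : (i : ℕ) ≠ t := by have : (t : ℕ) < i := hti; omega
    have h₂ : (i : ℕ) + 1 ≠ t := by have : (t : ℕ) < i := hti; omega
    simp only [submatrix_apply, id_eq, pencilCols]
    split_ifs <;> simp [pencil, shiftWitness, h₁, h₂]
    omega

theorem det_pencil_shiftWitness_one (h : l + 1 ≤ n + m) :
    ((pencil (Emat (shiftWitness l n m)) (Amat (shiftWitness l n m))
      (Bmat (shiftWitness l n m))).submatrix id (pencilCols 1 h)).det = C ((-1) ^ (l - m)) := by
  rw [det_of_isLowerTriangular]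
  · calc _ = ∏ t : Fin l, if (t : ℕ) < l - m then (-1 : ℝ[X]) else 1 := by
          refine Finset.prod_congr rfl fun t _ => ?_
          simp only [submatrix_apply, id_eq, pencilCols]
          split_ifs <;> simp [pencil, shiftWitness] <;> omega
      _ = C ((-1) ^ (l - m)) := by simp [Finset.prod_ite, Fin.card_filter_val_lt]
  · intro i t hti
    have h₁ : (i : ℕ) ≠ t := by have : (i : ℕ) < t := hti; omega
    have h₂ : (i : ℕ) ≠ t + 1 := by have : (i : ℕ) < t := hti; omega
    simp only [submatrix_apply, id_eq, pencilCols]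
    split_ifs <;> simp [pencil, shiftWitness, h₁, h₂]
    omega

theorem fromCols_shiftWitness_submatrix (h : l ≤ n + m) :
    (fromCols (Emat (shiftWitness l n m)) (Bmat (shiftWitness l n m))).submatrix id
      (pencilCols 0 h) = 1 := by
  ext i t
  simp only [submatrix_apply, id_eq, pencilCols, one_apply, Fin.ext_iff]
  split_ifs <;> simp [shiftWitness] <;> omega

theorem eval_stabilityCertificate_shiftWitness (h : l < n + m) :
    MvPolynomial.eval (shiftWitness l n m) (stabilityCertificate h) ≠ 0 := by
  rw [eval_stabilityCertificate, det_pencil_shiftWitness_zero, det_pencil_shiftWitness_one,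
    fromCols_shiftWitness_submatrix, det_one, mul_one, resultant_C_right]
  simp

theorem isGeneric_of_lt_add (h : l < n + m) :
    IsGeneric {x : SigmaIdx l n m → ℝ | CompletelyStabilizable x} :=
  isGeneric_of_eval_ne_zero_s19 (eval_stabilityCertificate_shiftWitness h)
    (completelyStabilizable_of_eval_ne_zero h)

theorem not_isGeneric_of_add_lt (hn : 1 ≤ n) (h : n + m < l) :
    ¬ IsGeneric {x : SigmaIdx l n m → ℝ | CompletelyStabilizable x} := by
  obtain ⟨ρ⟩ : Nonempty (Fin (n + m + 1) ↪ Fin l) :=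
    Function.Embedding.nonempty_of_card_le (by simp; omega)
  obtain ⟨c⟩ : Nonempty (Fin (n + m + 1) ↪ Fin n ⊕ Fin n ⊕ Fin m) :=
    Function.Embedding.nonempty_of_card_le (by simp; omega)
  let minor (x : SigmaIdx l n m → ℝ) : ℝ :=
    ((fromCols (Emat x) (fromCols (Amat x) (Bmat x))).submatrix ρ c).det
  have hminor : Continuous minor := by fun_prop
  refine not_isGeneric_of_isOpen (U := {x | minor x ≠ 0})
    (isOpen_ne_fun hminor continuous_const) ?_ fun x hx hS => ?_
  · obtain ⟨M, hM⟩ := exists_submatrix_eq_one_s19 (R := ℝ) ρ.injective c.injective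
    refine ⟨ofMatrices M.toCols₁ M.toCols₂.toCols₁ M.toCols₂.toCols₂, ?_⟩
    simp [minor, hM]
  · have hEAB : n + m + 1 ≤ (fromCols (Emat x) (fromCols (Amat x) (Bmat x))).rank := by
      simpa [rank_of_det_ne_zero (show minor x ≠ 0 from hx)] using
        rank_submatrix_le (fromCols (Emat x) (fromCols (Amat x) (Bmat x))) ρ c
    have hEB : (fromCols (Emat x) (Bmat x)).rank ≤ n + m := by
      simpa using rank_le_card_width (fromCols (Emat x) (Bmat x))
    have := (hS 0 le_rfl).1
    omega

section Square

theorem pencilC_ofReal (E A : Matrix (Fin l) (Fin n) ℝ) (B : Matrix (Fin l) (Fin m) ℝ) (t : ℝ) :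
    pencilC E A B t = (fromCols (t • E - A) B).map Complex.ofRealHom := by
  ext i (j | j) <;> simp [pencilC]

variable (e : Fin n ⊕ Fin m ≃ Fin l)

def squarePencilDet (x : SigmaIdx l n m → ℝ) (t : ℝ) : ℝ :=
  ((fromCols (t • Emat x - Amat x) (Bmat x)).submatrix id e.symm).det

theorem not_completelyStabilizable_of_squarePencilDet {x : SigmaIdx l n m → ℝ}
    (h₀ : squarePencilDet e x 0 < 0) (h₁ : 0 < squarePencilDet e x 1)
    (hEB : ((fromCols (Emat x) (Bmat x)).submatrix id e.symm).det ≠ 0) :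
    ¬ CompletelyStabilizable x := by
  intro hS
  obtain ⟨t, ht, hDt⟩ : ∃ t ∈ Set.Icc (0 : ℝ) 1, squarePencilDet e x t = 0 :=
    intermediate_value_Icc zero_le_one
      (by unfold squarePencilDet; fun_prop : Continuous (squarePencilDet e x)).continuousOn
      ⟨h₀.le, h₁.le⟩
  have hrankEB : (fromCols (Emat x) (Bmat x)).rank = l := by
    simpa using (rank_eq_card_iff_det_submatrix_ne_zero _ e.symm).mpr hEB
  have hdet : ((pencilC (Emat x) (Amat x) (Bmat x) t).submatrix id e.symm).det = 0 := by
    rw [pencilC_ofReal, ← RingHom.map_det_submatrix]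
    exact (congrArg _ hDt).trans (map_zero _)
  have hrankP : (pencilC (Emat x) (Amat x) (Bmat x) t).rank ≠ l := by
    simpa [hdet] using rank_eq_card_iff_det_submatrix_ne_zero
      (pencilC (Emat x) (Amat x) (Bmat x) t) e.symm
  exact hrankP (hrankEB ▸ (hS t ht.1).2).symm

def squareWitness (a : Fin n → ℝ) : SigmaIdx l n m → ℝ :=
  ofMatrices (of fun i j => if i = e (.inl j) then 1 else 0)
    (of fun i j => if i = e (.inl j) then a j else 0)
    (of fun i j => if i = e (.inr j) then 1 else 0)

theorem squarePencilDet_squareWitness (a : Fin n → ℝ) (t : ℝ) :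
    squarePencilDet e (squareWitness e a) t = ∏ j, (t - a j) := by
  have hdiag : (fromCols (t • Emat (squareWitness e a) - Amat (squareWitness e a))
      (Bmat (squareWitness e a))).submatrix id e.symm
      = diagonal fun k => Sum.elim (fun j => t - a j) 1 (e.symm k) := by
    ext i k
    obtain ⟨j | j, rfl⟩ := e.surjective k
    · by_cases hi : i = e (.inl j) <;> simp [squareWitness, diagonal, hi]
    · by_cases hi : i = e (.inr j) <;> simp [squareWitness, diagonal, hi]
  rw [squarePencilDet, hdiag, det_diagonal, e.symm.prod_comp (Sum.elim (fun j => t - a j) 1),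
    Fintype.prod_sum_type]
  simp

theorem fromCols_squareWitness_submatrix (a : Fin n → ℝ) :
    (fromCols (Emat (squareWitness e a)) (Bmat (squareWitness e a))).submatrix id e.symm = 1 := by
  ext i k
  obtain ⟨j | j, rfl⟩ := e.surjective k <;> simp [squareWitness, one_apply]

end Square

theorem not_isGeneric_of_eq_add (hn : 1 ≤ n) (h : l = n + m) :
    ¬ IsGeneric {x : SigmaIdx l n m → ℝ | CompletelyStabilizable x} := by
  let e : Fin n ⊕ Fin m ≃ Fin l := finSumFinEquiv.trans (finCongr h.symm)
  -- `∏ j, (t - a j)` changes sign on `[0, 1]` because exactly one `a j` lies in `[0, 1]`.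
  let a : Fin n → ℝ := fun j => if (j : ℕ) = 0 then 1 / 2 else -1
  have ha₀ : ∏ j, (0 - a j) < 0 := by
    rw [Finset.prod_eq_single_of_mem ⟨0, hn⟩ (Finset.mem_univ _) fun j _ hj => ?_]
    · norm_num [a]
    · have : (j : ℕ) ≠ 0 := fun h0 => hj (Fin.ext h0)
      simp [a, this]
  have ha₁ : 0 < ∏ j, (1 - a j) :=
    Finset.prod_pos fun j _ => by simp only [a]; split_ifs <;> norm_num
  refine not_isGeneric_of_isOpen (U := {x | squarePencilDet e x 0 < 0 ∧
      0 < squarePencilDet e x 1 ∧ ((fromCols (Emat x) (Bmat x)).submatrix id e.symm).det ≠ 0})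
    ?_ ⟨squareWitness e a, ?_⟩
    fun x hx => not_completelyStabilizable_of_squarePencilDet e hx.1 hx.2.1 hx.2.2
  · have hD (t : ℝ) : Continuous (squarePencilDet e · t) := by unfold squarePencilDet; fun_prop
    exact (isOpen_lt (hD 0) continuous_const).inter ((isOpen_lt continuous_const (hD 1)).inter
      (isOpen_ne_fun (by fun_prop) continuous_const))
  · simp only [Set.mem_ofPred_eq, squarePencilDet_squareWitness, fromCols_squareWitness_submatrix,
      det_one]
    exact ⟨ha₀, ha₁, one_ne_zero⟩

end DAE

theorem statement_19_general (l n m : ℕ) (hn : 1 ≤ n) :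
    IsGeneric {x : SigmaIdx l n m → ℝ |
        ∀ lam : ℂ, 0 ≤ lam.re →
          (Matrix.fromCols (Emat x) (Matrix.fromCols (Amat x) (Bmat x))).rank =
            (Matrix.fromCols (Emat x) (Bmat x)).rank ∧
          (Matrix.fromCols (Emat x) (Bmat x)).rank =
            (pencilC (Emat x) (Amat x) (Bmat x) lam).rank} ↔
      l < n + m := by
  refine ⟨fun hS => ?_, DAE.isGeneric_of_lt_add⟩
  by_contra! hle
  rcases hle.eq_or_lt with heq | hlt
  · exact DAE.not_isGeneric_of_eq_add hn heq.symm hS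
  · exact DAE.not_isGeneric_of_add_lt hn hlt hS

/-- The set of completely stabilizable DAE systems `d/dt(Ex) = Ax + Bu`, i.e. those with
`rk [E, A, B] = rk [E, B] = rk_ℂ [λE − A, B]` for every `λ ∈ ℂ` with `Re λ ≥ 0`, is
generic in `Σ_{ℓ,n,m}` if, and only if, `ℓ < n + m`. -/
theorem statement_19 (l n m : ℕ) (hl : 1 ≤ l) (hn : 1 ≤ n) (hm : 1 ≤ m) :
    IsGeneric {x : SigmaIdx l n m → ℝ |
        ∀ lam : ℂ, 0 ≤ lam.re →
          (Matrix.fromCols (Emat x) (Matrix.fromCols (Amat x) (Bmat x))).rank =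
            (Matrix.fromCols (Emat x) (Bmat x)).rank ∧
          (Matrix.fromCols (Emat x) (Bmat x)).rank =
            (pencilC (Emat x) (Amat x) (Bmat x) lam).rank} ↔
      l < n + m :=
  statement_19_general l n m hn
end
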